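/- arXiv:2508.18666 — 6 statements merged into one kernel-verified Lean document; each statement's English description precedes it below -/
import Mathlib

section
/- Let q(x) = Ax² + Bx + C with A, B, C ∈ ℤ, A ≠ 0, and discriminant D = B² − 4AC not a perfect square (so q is irreducible over ℚ). For every ε > 0 there is a constant C₀ > 0, depending only on ε, A, B and C, with the following property. Let c be a positive integer and write c = c₁·c₂, where c₂ is the largest divisor of c all of whose prime factors divide 2A (so that gcd(4A, c₁) = 1). Then for all integers u, v: if gcd(v, c₁) does not divide u, then S_c^{B,C}(A; u, v) = 0; and in all cases |S_c^{B,C}(A; u, v)| ≤ C₀ · gcd(v, c₁) · c₁^{3/2} · c₂^{5/2+ε}. -/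
/-- `e_c(t) = exp(2πi t / c)`. -/
noncomputable def eC (c : ℕ) (t : ℤ) : ℂ :=
  Complex.exp (2 * Real.pi * Complex.I * t / c)

lemma eC_add (c : ℕ) (s t : ℤ) : eC c (s + t) = eC c s * eC c t := by
  unfold eC
  rw [← Complex.exp_add]
  congr 1
  push_cast
  ring

lemma eC_congr (c : ℕ) (s t : ℤ) (h : (s : ZMod c) = (t : ZMod c)) : eC c s = eC c t := by
  rcases Nat.eq_zero_or_pos c with rfl | hc
  · have : s = t := by simpa using h
    rw [this]
  have h' : s ≡ t [ZMOD c] := (ZMod.intCast_eq_intCast_iff _ _ _).mp h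
  obtain ⟨k, hk⟩ : (c : ℤ) ∣ t - s := Int.ModEq.dvd h'
  have ht : t = s + c * k := by linarith
  rw [ht, eC_add]
  have : eC c (c * k) = 1 := by
    unfold eC
    have hc0 : (c : ℂ) ≠ 0 := by exact_mod_cast hc.ne'
    have : 2 * (Real.pi:ℂ) * Complex.I * ((c:ℂ) * (k:ℂ)) / (c:ℂ) = k * (2 * Real.pi * Complex.I) := by
      field_simp
    push_cast
    rw [this, Complex.exp_int_mul_two_pi_mul_I]
  rw [this, mul_one]

lemma eC_abs (c : ℕ) (t : ℤ) : ‖eC c t‖ = 1 := by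
  unfold eC
  have : 2 * (Real.pi:ℂ) * Complex.I * (t:ℂ) / (c:ℂ) = ((2 * Real.pi * t / c : ℝ) : ℂ) * Complex.I := by
    push_cast; ring
  rw [this, Complex.norm_exp_ofReal_mul_I]

noncomputable def Echar (c : ℕ) (z : ZMod c) : ℂ := eC c z.val

lemma natCast_val_self (c : ℕ) [NeZero c] (x : ZMod c) : ((x.val : ℤ) : ZMod c) = x := by
  push_cast
  simp [ZMod.natCast_val, ZMod.cast_id]

lemma Echar_intCast (c : ℕ) [NeZero c] (t : ℤ) : Echar c ((t : ZMod c)) = eC c t := by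
  unfold Echar
  apply eC_congr
  exact natCast_val_self c (t : ZMod c)

lemma Echar_add (c : ℕ) [NeZero c] (x y : ZMod c) : Echar c (x + y) = Echar c x * Echar c y := by
  have hx : x = ((x.val : ℤ) : ZMod c) := (natCast_val_self c x).symm
  have hy : y = ((y.val : ℤ) : ZMod c) := (natCast_val_self c y).symm
  rw [hx, hy, ← Int.cast_add, Echar_intCast, Echar_intCast, Echar_intCast, eC_add]

lemma Echar_zero (c : ℕ) [NeZero c] : Echar c 0 = 1 := by
  have := Echar_intCast c 0
  simpa [eC] using this

lemma Echar_abs (c : ℕ) (z : ZMod c) : ‖Echar c z‖ = 1 := eC_abs c z.val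

lemma Echar_conj (c : ℕ) [NeZero c] (z : ZMod c) : (starRingEnd ℂ) (Echar c z) = Echar c (-z) := by
  have h1 : (starRingEnd ℂ) (eC c z.val) = eC c (-(z.val : ℤ)) := by
    unfold eC
    rw [← Complex.exp_conj]
    congr 1
    rw [map_div₀, map_mul, map_mul, map_mul, Complex.conj_I, Complex.conj_ofReal,
      map_intCast (starRingEnd ℂ) (z.val:ℤ), map_natCast (starRingEnd ℂ) c, map_ofNat]
    push_cast
    ring
  have h2 : ((-(z.val : ℤ) : ℤ) : ZMod c) = -z := by
    rw [Int.cast_neg, natCast_val_self]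
  calc (starRingEnd ℂ) (Echar c z) = eC c (-(z.val:ℤ)) := h1
    _ = Echar c (-z) := by rw [← Echar_intCast, h2]

/-- The Kloosterman sum `S(m, n; c) = ∑_{x mod c, (x,c)=1} e_c(m x + n x̄)`. -/
noncomputable def Kl (m n : ℤ) (c : ℕ) : ℂ :=
  ∑ x ∈ (Finset.range c).filter (fun x => Nat.Coprime x c),
    eC c (m * x + n * (((x : ZMod c)⁻¹).val : ℤ))

/-- The sum `S_c^{B,C}(γ; u, v) = ∑_{a,b mod c} S(γa²+Ba+C, γb²+Bb+C; c)
    e_c(2γab + a(B+u) + b(B+v))`. -/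
noncomputable def Sbc (γ B C u v : ℤ) (c : ℕ) : ℂ :=
  ∑ a ∈ Finset.range c, ∑ b ∈ Finset.range c,
    Kl (γ * (a : ℤ) ^ 2 + B * a + C) (γ * (b : ℤ) ^ 2 + B * b + C) c *
      eC c (2 * γ * a * b + a * (B + u) + b * (B + v))

lemma sum_range_val (c : ℕ) [NeZero c] (f : ℕ → ℂ) :
    ∑ x ∈ Finset.range c, f x = ∑ z : ZMod c, f z.val := by
  refine Finset.sum_nbij' (fun x => (x : ZMod c)) (fun z => z.val) ?_ ?_ ?_ ?_ ?_
  · intro a _; exact Finset.mem_univ _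
  · intro z _; exact Finset.mem_range.mpr (ZMod.val_lt z)
  · intro a ha; exact ZMod.val_cast_of_lt (Finset.mem_range.mp ha)
  · intro z _; simp [ZMod.natCast_val, ZMod.cast_id]
  · intro a ha; rw [ZMod.val_cast_of_lt (Finset.mem_range.mp ha)]

lemma Echar_pow (c : ℕ) [NeZero c] (z : ZMod c) (n : ℕ) :
    Echar c z ^ n = Echar c (n • z) := by
  induction n with
  | zero => simp [Echar_zero]
  | succ k ih => rw [pow_succ, ih, succ_nsmul, Echar_add]

lemma Echar_eq_one_iff (c : ℕ) [NeZero c] (z : ZMod c) : Echar c z = 1 ↔ z = 0 := by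
  constructor
  · intro h
    unfold Echar eC at h
    rw [Complex.exp_eq_one_iff] at h
    obtain ⟨n, hn⟩ := h
    have hc0 : (c : ℂ) ≠ 0 := Nat.cast_ne_zero.mpr (NeZero.ne c)
    have hpi : (2 * (Real.pi:ℂ) * Complex.I) ≠ 0 := by
      simp [Real.pi_ne_zero, Complex.I_ne_zero]
    have h2 : ((z.val : ℤ) : ℂ) = n * c := by
      apply mul_left_cancel₀ hpi
      have h' := congrArg (fun w : ℂ => w * c) hn
      rw [div_mul_cancel₀ _ hc0] at h'
      rw [h']; ring
    have h3 : (z.val : ℤ) = n * c := by exact_mod_cast h2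
    have h4 : (c : ℤ) ∣ (z.val : ℤ) := ⟨n, by linarith⟩
    have h5 : (c : ℕ) ∣ z.val := Int.ofNat_dvd.mp (by exact_mod_cast h4)
    have h6 : z.val = 0 := Nat.eq_zero_of_dvd_of_lt h5 (ZMod.val_lt z)
    exact (ZMod.val_eq_zero z).mp h6
  · rintro rfl; exact Echar_zero c

lemma Echar_sum_mul (c : ℕ) [NeZero c] (m : ZMod c) :
    ∑ b : ZMod c, Echar c (m * b) = if m = 0 then (c : ℂ) else 0 := by
  split_ifs with hm
  · subst hm
    simp [Echar_zero, Finset.card_univ, ZMod.card]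
  · have key : ∀ b : ZMod c, Echar c (m * b) = Echar c m ^ b.val := by
      intro b
      rw [Echar_pow]
      congr 1
      rw [nsmul_eq_mul, mul_comm]
      congr 1
      simp [ZMod.natCast_val, ZMod.cast_id]
    rw [Fintype.sum_congr _ _ key]
    rw [← sum_range_val c (fun n => Echar c m ^ n)]
    have hζ : Echar c m ≠ 1 := fun h => hm ((Echar_eq_one_iff c m).mp h)
    rw [geom_sum_eq hζ]
    have hc : Echar c m ^ c = 1 := by
      rw [Echar_pow]
      have : c • m = 0 := by simp [nsmul_eq_mul, ZMod.natCast_self]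
      rw [this, Echar_zero]
    rw [hc, sub_self, zero_div]
lemma ker_card_le (c : ℕ) [NeZero c] (m : ℤ) :
    (Finset.univ.filter (fun h : ZMod c => (m : ZMod c) * h = 0)).card ≤ Int.gcd m c := by
  set g := Int.gcd m (c : ℤ) with hg_def
  have hc0 : c ≠ 0 := NeZero.ne c
  have hg : 0 < g := Int.gcd_pos_iff.mpr (Or.inr (by exact_mod_cast hc0))
  have hgc : g ∣ c := by
    have h1 : (g : ℤ) ∣ (c : ℤ) := Int.gcd_dvd_right _ _
    exact_mod_cast h1
  set d := c / g with hd_def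
  have hcd : c = g * d := (Nat.mul_div_cancel' hgc).symm
  have hd0 : 0 < d := by
    rcases Nat.eq_zero_or_pos d with h | h
    · exfalso; rw [h, mul_zero] at hcd; exact hc0 hcd
    · exact h
  have key : ∀ h : ZMod c, (m : ZMod c) * h = 0 → d ∣ h.val := by
    intro h hh
    have h2 : (c : ℤ) ∣ m * (h.val : ℤ) := by
      rw [← ZMod.intCast_zmod_eq_zero_iff_dvd]
      push_cast [ZMod.natCast_val, ZMod.cast_id]
      exact hh
    have hgm : (g : ℤ) ∣ m := Int.gcd_dvd_left _ _
    obtain ⟨m', hm'⟩ := hgm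
    have hdvd : (d : ℤ) ∣ m' * (h.val : ℤ) := by
      have : (g : ℤ) * d ∣ (g : ℤ) * (m' * (h.val : ℤ)) := by
        rw [← mul_assoc, ← hm']
        calc (g:ℤ) * d = (c : ℤ) := by exact_mod_cast hcd.symm
          _ ∣ m * (h.val : ℤ) := h2
      exact (mul_dvd_mul_iff_left (by exact_mod_cast hg.ne' : (g:ℤ) ≠ 0)).mp this
    have hcop : IsCoprime (d : ℤ) m' := by
      rw [Int.isCoprime_iff_gcd_eq_one]
      have hm'eq : m' = m / g := by
        rw [hm']; rw [Int.mul_ediv_cancel_left _ (by exact_mod_cast hg.ne' : (g:ℤ) ≠ 0)]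
      have hdeq : (d : ℤ) = (c : ℤ) / g := by
        rw [hcd]; push_cast
        rw [Int.mul_ediv_cancel_left _ (by exact_mod_cast hg.ne' : (g:ℤ) ≠ 0)]
      rw [hm'eq, hdeq, Int.gcd_comm]
      exact Int.gcd_div_gcd_div_gcd hg
    have : (d : ℤ) ∣ (h.val : ℤ) := hcop.dvd_of_dvd_mul_left hdvd
    exact_mod_cast this
  apply le_trans (Finset.card_le_card_of_injOn (fun h => h.val / d)
    (fun h hh => ?_) (fun h1 hh1 h2 hh2 heq => ?_)) (by simp : (Finset.range g).card ≤ g)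
  · simp only [Finset.coe_range, Set.mem_Iio, Finset.mem_coe, Finset.mem_range]
    rw [Nat.div_lt_iff_lt_mul hd0]
    calc h.val < c := ZMod.val_lt h
      _ = g * d := hcd
      _ ≤ g * d := le_refl _
  · simp only [Finset.mem_coe, Finset.mem_filter, Finset.mem_univ, true_and] at hh1 hh2
    have d1 := key h1 hh1
    have d2 := key h2 hh2
    have heq' : h1.val / d = h2.val / d := heq
    apply ZMod.val_injective
    rw [← Nat.mul_div_cancel' d1, ← Nat.mul_div_cancel' d2, heq']

lemma sol_card_le (c : ℕ) [NeZero c] (v u : ℤ) :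
    (Finset.univ.filter (fun x : ZMod c => x * (v : ZMod c) = (u : ZMod c))).card ≤
      Int.gcd v (c : ℤ) := by
  by_cases hS : (Finset.univ.filter (fun x : ZMod c => x * (v : ZMod c) = (u : ZMod c))).Nonempty
  · obtain ⟨x₀, hx₀⟩ := hS
    simp only [Finset.mem_filter, Finset.mem_univ, true_and] at hx₀
    refine le_trans (Finset.card_le_card_of_injOn (fun x => x - x₀) (fun x hx => ?_)
      (fun y1 h1 y2 h2 heq => ?_)) (ker_card_le c v)
    · simp only [Finset.mem_coe, Finset.mem_filter, Finset.mem_univ, true_and] at hx ⊢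
      rw [mul_comm, sub_mul, hx, hx₀, sub_self]
    
    · exact sub_left_injective heq
  · rw [Finset.not_nonempty_iff_eq_empty.mp hS]
    simp
lemma gauss_sq_le (c : ℕ) [NeZero c] (α L : ZMod c) :
    (‖∑ t : ZMod c, Echar c (α * t^2 + L * t)‖)^2 ≤
      (c : ℝ) * ((Finset.univ.filter (fun h : ZMod c => 2 * α * h = 0)).card : ℝ) := by
  set S := ∑ t : ZMod c, Echar c (α * t^2 + L * t) with hS
  have e1 : S * (starRingEnd ℂ) S =
      ∑ s : ZMod c, ∑ t : ZMod c, Echar c ((α*t^2+L*t) - (α*s^2+L*s)) := by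
    rw [hS, map_sum, Finset.sum_mul_sum, Finset.sum_comm]
    refine Finset.sum_congr rfl fun s _ => Finset.sum_congr rfl fun t _ => ?_
    rw [Echar_conj, ← Echar_add]
    congr 1
    ring
  have e3 : ∀ s : ZMod c, (∑ t : ZMod c, Echar c ((α*t^2+L*t) - (α*s^2+L*s))) =
      ∑ h : ZMod c, Echar c (α*h^2 + L*h) * Echar c ((2*α*h) * s) := by
    intro s
    refine (Fintype.sum_equiv (Equiv.addLeft s) _ _ fun h => ?_).symm
    rw [← Echar_add]
    congr 1
    show α*h^2 + L*h + (2*α*h)*s = α*(s+h)^2 + L*(s+h) - (α*s^2+L*s)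
    ring
  have key : S * (starRingEnd ℂ) S =
      (c : ℂ) * ∑ h ∈ Finset.univ.filter (fun h : ZMod c => 2 * α * h = 0),
        Echar c (α * h^2 + L * h) := by
    rw [e1]
    rw [Finset.sum_congr rfl fun s _ => e3 s]
    rw [Finset.sum_comm]
    have : ∀ h : ZMod c, (∑ s : ZMod c, Echar c (α*h^2 + L*h) * Echar c ((2*α*h) * s)) =
        Echar c (α*h^2+L*h) * (if 2*α*h = 0 then (c:ℂ) else 0) := by
      intro h
      rw [← Finset.mul_sum, Echar_sum_mul]
    rw [Finset.sum_congr rfl fun h _ => this h]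
    rw [Finset.mul_sum]
    rw [← Finset.sum_filter_add_sum_filter_not Finset.univ (fun h : ZMod c => 2*α*h = 0)]
    have z2 : (∑ h ∈ Finset.univ.filter (fun h : ZMod c => ¬ (2*α*h = 0)),
        Echar c (α*h^2+L*h) * (if 2*α*h = 0 then (c:ℂ) else 0)) = 0 := by
      apply Finset.sum_eq_zero
      intro h hh
      simp only [Finset.mem_filter] at hh
      rw [if_neg hh.2, mul_zero]
    rw [z2, add_zero]
    refine Finset.sum_congr rfl fun h hh => ?_
    simp only [Finset.mem_filter] at hh
    rw [if_pos hh.2]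
    ring
  have habs : ‖S‖^2 = ‖S * (starRingEnd ℂ) S‖ := by
    rw [norm_mul, Complex.norm_conj, sq]
  rw [habs, key, norm_mul, Complex.norm_natCast]
  gcongr
  calc ‖∑ h ∈ Finset.univ.filter (fun h : ZMod c => 2*α*h = 0), Echar c (α*h^2+L*h)‖
      ≤ ∑ h ∈ Finset.univ.filter (fun h : ZMod c => 2*α*h = 0), ‖Echar c (α*h^2+L*h)‖ :=
        norm_sum_le _ _
    _ = ∑ h ∈ Finset.univ.filter (fun h : ZMod c => 2*α*h = 0), 1 := by
        refine Finset.sum_congr rfl fun h _ => Echar_abs c _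
    _ = _ := by simp
lemma natCast_val_self' (c : ℕ) [NeZero c] (x : ZMod c) : ((x.val : ℕ) : ZMod c) = x := by
  simp [ZMod.natCast_val, ZMod.cast_id]

lemma Kl_eq (c : ℕ) [NeZero c] (m n : ℤ) :
    Kl m n c = ∑ x ∈ Finset.univ.filter (fun x : ZMod c => IsUnit x),
      Echar c ((m : ZMod c) * x + (n : ZMod c) * x⁻¹) := by
  unfold Kl
  refine Finset.sum_nbij' (fun x => (x : ZMod c)) (fun z => z.val) ?_ ?_ ?_ ?_ ?_
  · intro a ha
    simp only [Finset.mem_filter, Finset.mem_range] at ha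
    simp only [Finset.mem_filter, Finset.mem_univ, true_and]
    exact (ZMod.isUnit_iff_coprime a c).mpr ha.2
  · intro z hz
    simp only [Finset.mem_filter, Finset.mem_univ, true_and] at hz
    simp only [Finset.mem_filter, Finset.mem_range]
    refine ⟨ZMod.val_lt z, (ZMod.isUnit_iff_coprime z.val c).mp ?_⟩
    rwa [natCast_val_self']
  · intro a ha
    exact ZMod.val_cast_of_lt (Finset.mem_range.mp (Finset.mem_filter.mp ha).1)
  · intro z _
    exact natCast_val_self' c z
  · intro a ha
    rw [← Echar_intCast]
    congr 1
    push_cast [natCast_val_self']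
    ring
noncomputable def Phi (c : ℕ) [NeZero c] (A B C u v : ℤ) (x a b : ZMod c) : ℂ :=
  Echar c (((A:ZMod c)*a^2 + (B:ZMod c)*a + (C:ZMod c)) * x
    + ((A:ZMod c)*b^2 + (B:ZMod c)*b + (C:ZMod c)) * x⁻¹
    + (2*(A:ZMod c)*a*b + a*((B:ZMod c)+(u:ZMod c)) + b*((B:ZMod c)+(v:ZMod c))))

noncomputable def Gx (c : ℕ) [NeZero c] (A B C u : ℤ) (x : ZMod c) : ℂ :=
  ∑ t : ZMod c, Echar c ((A:ZMod c)*x*t^2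
    + ((B:ZMod c)*x + (B:ZMod c) + (u:ZMod c))*t + (C:ZMod c)*(x+x⁻¹))

lemma step_A1 (A B C u v : ℤ) (c : ℕ) [NeZero c] :
    Sbc A B C u v c = ∑ a : ZMod c, ∑ b : ZMod c,
      ∑ x ∈ Finset.univ.filter (fun x : ZMod c => IsUnit x), Phi c A B C u v x a b := by
  unfold Sbc Phi
  rw [sum_range_val]
  refine Finset.sum_congr rfl fun a _ => ?_
  rw [sum_range_val]
  refine Finset.sum_congr rfl fun b _ => ?_
  rw [Kl_eq, Finset.sum_mul]
  refine Finset.sum_congr rfl fun x _ => ?_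
  rw [← Echar_intCast, ← Echar_add]
  congr 1
  push_cast [natCast_val_self']
  ring

lemma step_A3 (A B C u v : ℤ) (c : ℕ) [NeZero c] (x : ZMod c) (hx' : IsUnit x) :
    (∑ a : ZMod c, ∑ b : ZMod c, Phi c A B C u v x a b)
      = if x * (v : ZMod c) = (u : ZMod c) then (c : ℂ) * Gx c A B C u x else 0 := by
  have hxy : x * x⁻¹ = 1 := ZMod.mul_inv_of_unit x hx'
  have key : ∀ b : ZMod c, (∑ a : ZMod c, Phi c A B C u v x a b)
      = Gx c A B C u x * Echar c (((v : ZMod c) - x⁻¹ * (u : ZMod c)) * b) := by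
    intro b
    unfold Phi Gx
    rw [Finset.sum_mul]
    refine (Fintype.sum_equiv (Equiv.subRight (x⁻¹ * b)) _ _ fun t => ?_).symm
    rw [← Echar_add]
    congr 1
    show (A : ZMod c) * x * t^2 + ((B:ZMod c)*x + (B:ZMod c) + (u:ZMod c)) * t
        + (C:ZMod c)*(x + x⁻¹) + ((v:ZMod c) - x⁻¹*(u:ZMod c)) * b
      = ((A:ZMod c)*(t - x⁻¹*b)^2 + (B:ZMod c)*(t - x⁻¹*b) + (C:ZMod c)) * x
        + ((A:ZMod c)*b^2 + (B:ZMod c)*b + (C:ZMod c)) * x⁻¹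
        + (2*(A:ZMod c)*(t - x⁻¹*b)*b + (t - x⁻¹*b)*((B:ZMod c)+(u:ZMod c))
            + b*((B:ZMod c)+(v:ZMod c)))
    linear_combination (2*(A:ZMod c)*t*b + (B:ZMod c)*b - (A:ZMod c)*x⁻¹*b^2) * hxy
  calc (∑ a : ZMod c, ∑ b : ZMod c, Phi c A B C u v x a b)
      = ∑ b : ZMod c, ∑ a : ZMod c, Phi c A B C u v x a b := Finset.sum_comm
    _ = Gx c A B C u x * ∑ b : ZMod c, Echar c (((v : ZMod c) - x⁻¹ * (u : ZMod c)) * b) := by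
        rw [Finset.mul_sum]
        exact Finset.sum_congr rfl fun b _ => key b
    _ = _ := by
        rw [Echar_sum_mul]
        have hiff : ((v : ZMod c) - x⁻¹ * (u : ZMod c) = 0) ↔ (x * (v : ZMod c) = (u : ZMod c)) := by
          constructor
          · intro h
            linear_combination x * h + (u : ZMod c) * hxy
          · intro h
            linear_combination x⁻¹ * h - (v:ZMod c) * hxy
        by_cases hcond : x * (v : ZMod c) = (u : ZMod c)
        · rw [if_pos (hiff.mpr hcond), if_pos hcond]
          ring
        · rw [if_neg (fun h => hcond (hiff.mp h)), if_neg hcond]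
          ring

lemma Sbc_eq (A B C u v : ℤ) (c : ℕ) [NeZero c] :
    Sbc A B C u v c = ∑ x ∈ Finset.univ.filter (fun x : ZMod c => IsUnit x),
      (if x * (v : ZMod c) = (u : ZMod c) then (c : ℂ) * Gx c A B C u x else 0) := by
  rw [step_A1 A B C u v c]
  calc (∑ a : ZMod c, ∑ b : ZMod c,
        ∑ x ∈ Finset.univ.filter (fun x : ZMod c => IsUnit x), Phi c A B C u v x a b)
      = ∑ a : ZMod c, ∑ x ∈ Finset.univ.filter (fun x : ZMod c => IsUnit x),
          ∑ b : ZMod c, Phi c A B C u v x a b :=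
        Finset.sum_congr rfl fun a _ => Finset.sum_comm
    _ = ∑ x ∈ Finset.univ.filter (fun x : ZMod c => IsUnit x),
          ∑ a : ZMod c, ∑ b : ZMod c, Phi c A B C u v x a b := Finset.sum_comm
    _ = _ := Finset.sum_congr rfl fun x hx =>
        step_A3 A B C u v c x (Finset.mem_filter.mp hx).2
lemma ker_card_unit (c : ℕ) [NeZero c] (m : ℤ) (x : ZMod c) (hx : IsUnit x) :
    (Finset.univ.filter (fun h : ZMod c => 2 * ((m : ZMod c) * x) * h = 0)).card ≤
      Int.gcd (2 * m) (c : ℤ) := by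
  refine le_trans (le_of_eq (Finset.card_bij (fun h _ => x * h) ?_ ?_ ?_)) (ker_card_le c (2*m))
  · intro h hh
    simp only [Finset.mem_filter, Finset.mem_univ, true_and] at hh ⊢
    have e : ((2 * m : ℤ) : ZMod c) * (x * h) = 2 * ((m : ZMod c) * x) * h := by
      push_cast; ring
    rw [e]; exact hh
  · intro h1 _ h2 _ heq
    exact hx.mul_left_cancel heq
  · intro h' hh'
    simp only [Finset.mem_filter, Finset.mem_univ, true_and] at hh' ⊢
    have hxy : x * x⁻¹ = 1 := ZMod.mul_inv_of_unit x hx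
    refine ⟨x⁻¹ * h', ?_, ?_⟩
    · have e : 2 * ((m : ZMod c) * x) * (x⁻¹ * h') = ((2 * m : ℤ) : ZMod c) * h'
          + (2 * (m : ZMod c) * h') * (x * x⁻¹ - 1) := by
        push_cast; ring
      rw [e, hxy, sub_self, mul_zero, add_zero, hh']
    · calc x * (x⁻¹ * h') = (x * x⁻¹) * h' := by ring
        _ = h' := by rw [hxy, one_mul]

lemma Gx_bound (A B C u : ℤ) (hA : A ≠ 0) (c : ℕ) [NeZero c] (x : ZMod c) (hx : IsUnit x) :
    ‖Gx c A B C u x‖ ≤ Real.sqrt ((c : ℝ) * (2 * A.natAbs)) := by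
  have hfac : Gx c A B C u x =
      (∑ t : ZMod c, Echar c ((A : ZMod c) * x * t^2
        + ((B : ZMod c) * x + (B : ZMod c) + (u : ZMod c)) * t))
        * Echar c ((C : ZMod c) * (x + x⁻¹)) := by
    unfold Gx
    rw [Finset.sum_mul]
    exact Finset.sum_congr rfl fun t _ => Echar_add c _ _
  have habs : ‖Gx c A B C u x‖ =
      ‖∑ t : ZMod c, Echar c ((A : ZMod c) * x * t^2
        + ((B : ZMod c) * x + (B : ZMod c) + (u : ZMod c)) * t)‖ := by
    rw [hfac, norm_mul, Echar_abs, mul_one]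
  rw [habs]
  rw [show ∀ y : ℝ, Real.sqrt y = Real.sqrt y from fun _ => rfl]
  rw [← Real.sqrt_sq (norm_nonneg _)]
  apply Real.sqrt_le_sqrt
  have h1 := gauss_sq_le c ((A : ZMod c) * x) ((B : ZMod c) * x + (B : ZMod c) + (u : ZMod c))
  refine le_trans h1 ?_
  have h2 : ((Finset.univ.filter (fun h : ZMod c => 2 * ((A : ZMod c) * x) * h = 0)).card : ℝ)
      ≤ (2 * A.natAbs : ℝ) := by
    have h3 := ker_card_unit c A x hx
    have h4 : Int.gcd (2 * A) (c : ℤ) ≤ 2 * A.natAbs := by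
      have hd : (Int.gcd (2 * A) (c : ℤ) : ℤ) ∣ 2 * A := Int.gcd_dvd_left _ _
      have hpos : (0 : ℤ) < |2 * A| := by
        simp [abs_pos]
        exact hA
      have h2A : (2 * A : ℤ) ≠ 0 := by
        intro h; apply hA; omega
      have := Int.le_of_dvd (abs_pos.mpr h2A) ((dvd_abs _ _).mpr hd)
      have habs2 : |2 * A| = (2 * A.natAbs : ℤ) := by
        rw [abs_mul, Int.abs_eq_natAbs A]
        norm_num
      omega
    calc ((Finset.univ.filter (fun h : ZMod c => 2 * ((A : ZMod c) * x) * h = 0)).card : ℝ)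
        ≤ (Int.gcd (2 * A) (c : ℤ) : ℝ) := by exact_mod_cast h3
      _ ≤ _ := by exact_mod_cast h4
  calc (c : ℝ) * ((Finset.univ.filter (fun h : ZMod c => 2 * ((A : ZMod c) * x) * h = 0)).card : ℝ)
      ≤ (c : ℝ) * (2 * A.natAbs : ℝ) := by
        apply mul_le_mul_of_nonneg_left h2 (Nat.cast_nonneg c)
    _ = _ := rfl
lemma rpow_3half (n : ℕ) (hn : 0 < n) : (n:ℝ)^((3:ℝ)/2) = n * Real.sqrt n := by
  have hpos : (0:ℝ) < n := by exact_mod_cast hn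
  rw [Real.sqrt_eq_rpow, show ((3:ℝ)/2) = 1 + 1/2 by norm_num, Real.rpow_add hpos,
    Real.rpow_one]

lemma rpow_5half (n : ℕ) (hn : 0 < n) : (n:ℝ)^((5:ℝ)/2) = n^2 * Real.sqrt n := by
  have hpos : (0:ℝ) < n := by exact_mod_cast hn
  rw [Real.sqrt_eq_rpow, show ((5:ℝ)/2) = 2 + 1/2 by norm_num, Real.rpow_add hpos]
  norm_num [Real.rpow_two]

/-- Main Kloosterman-sum bound: for an irreducible integral quadratic
`q(x) = Ax² + Bx + C` (discriminant not a perfect square), for every `ε > 0`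
there is `C₀ > 0` depending only on `ε, A, B, C` such that, writing
`c = c₁ c₂` with `gcd(4A, c₁) = 1` and every prime factor of `c₂` dividing
`2A`, the sum `S_c^{B,C}(A; u, v)` vanishes if `gcd(v, c₁) ∤ u`, and is
always bounded by `C₀ · gcd(v, c₁) · c₁^{3/2} · c₂^{5/2+ε}`. -/
theorem statement0 (A B C : ℤ) (hA : A ≠ 0) (hD : ¬ IsSquare (B ^ 2 - 4 * A * C))
    (ε : ℝ) (hε : 0 < ε) :
    ∃ C₀ : ℝ, 0 < C₀ ∧
      ∀ c c₁ c₂ : ℕ, 0 < c → c = c₁ * c₂ →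
        Int.gcd (4 * A) (c₁ : ℤ) = 1 →
        (∀ p : ℕ, p.Prime → p ∣ c₂ → (p : ℤ) ∣ 2 * A) →
        ∀ u v : ℤ,
          (¬ ((Int.gcd v (c₁ : ℤ) : ℤ) ∣ u) → Sbc A B C u v c = 0) ∧
          ‖Sbc A B C u v c‖ ≤
            C₀ * (Int.gcd v (c₁ : ℤ) : ℝ) * (c₁ : ℝ) ^ ((3 : ℝ) / 2) *
              (c₂ : ℝ) ^ ((5 : ℝ) / 2 + ε) := by
  refine ⟨Real.sqrt (2 * A.natAbs), Real.sqrt_pos.mpr (by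
    have : 0 < A.natAbs := Int.natAbs_pos.mpr hA
    positivity), ?_⟩
  intro c c₁ c₂ hc hsplit hco hprime u v
  haveI : NeZero c := ⟨hc.ne'⟩
  have hc₁ : 0 < c₁ := Nat.pos_of_ne_zero
    (fun h => by rw [hsplit, h, zero_mul] at hc; exact lt_irrefl 0 hc)
  have hc₂ : 0 < c₂ := Nat.pos_of_ne_zero
    (fun h => by rw [hsplit, h, mul_zero] at hc; exact lt_irrefl 0 hc)
  constructor
  · -- vanishing
    intro hnd
    rw [Sbc_eq]
    apply Finset.sum_eq_zero
    intro x hx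
    rw [if_neg]
    intro hcond
    apply hnd
    have hdvdc : (c : ℤ) ∣ (x.val : ℤ) * v - u := by
      rw [← ZMod.intCast_zmod_eq_zero_iff_dvd]
      push_cast [ZMod.natCast_val, ZMod.cast_id]
      exact sub_eq_zero_of_eq hcond
    have h1 : (Int.gcd v (c₁:ℤ) : ℤ) ∣ v := Int.gcd_dvd_left _ _
    have h2 : (Int.gcd v (c₁:ℤ) : ℤ) ∣ (c₁:ℤ) := Int.gcd_dvd_right _ _
    have h3 : (c₁:ℤ) ∣ (c:ℤ) := ⟨(c₂:ℤ), by rw [hsplit]; push_cast; ring⟩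
    have h4 : (Int.gcd v (c₁:ℤ) : ℤ) ∣ (x.val : ℤ) * v - u := (h2.trans h3).trans hdvdc
    have h5 : (Int.gcd v (c₁:ℤ) : ℤ) ∣ (x.val : ℤ) * v := Dvd.dvd.mul_left h1 _
    have hu : u = (x.val : ℤ) * v - ((x.val : ℤ) * v - u) := by ring
    rw [hu]
    exact dvd_sub h5 h4
  · -- bound
    rw [Sbc_eq]
    set M := Real.sqrt ((c : ℝ) * (2 * A.natAbs)) with hM
    have hM0 : 0 ≤ M := Real.sqrt_nonneg _
    have hcard : ((Finset.univ.filter (fun x : ZMod c => IsUnit x)).filter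
        (fun x : ZMod c => x * (v : ZMod c) = (u : ZMod c))).card ≤ Int.gcd v (c₁:ℤ) * c₂ := by
      have hsub : ((Finset.univ.filter (fun x : ZMod c => IsUnit x)).filter
          (fun x : ZMod c => x * (v : ZMod c) = (u : ZMod c))) ⊆
          Finset.univ.filter (fun x : ZMod c => x * (v : ZMod c) = (u : ZMod c)) := by
        intro z hz
        simp only [Finset.mem_filter, Finset.mem_univ, true_and] at hz ⊢
        exact hz.2
      have hgcdmul : Int.gcd v (c:ℤ) ≤ Int.gcd v (c₁:ℤ) * c₂ := by
        have hdd : Int.gcd v (c:ℤ) ∣ Int.gcd v (c₁:ℤ) * Int.gcd v (c₂:ℤ) := by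
          have hh := Nat.gcd_mul_right_dvd_mul_gcd v.natAbs c₁ c₂
          simpa [Int.gcd, hsplit, Int.natAbs_mul] using hh
        have hg2 : Int.gcd v (c₂:ℤ) ≤ c₂ := by
          have : (Int.gcd v (c₂:ℤ) : ℤ) ∣ (c₂:ℤ) := Int.gcd_dvd_right _ _
          exact Nat.le_of_dvd hc₂ (by exact_mod_cast this)
        have hg1pos : 0 < Int.gcd v (c₁:ℤ) :=
          Int.gcd_pos_iff.mpr (Or.inr (by exact_mod_cast hc₁.ne'))
        have hg2pos : 0 < Int.gcd v (c₂:ℤ) :=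
          Int.gcd_pos_iff.mpr (Or.inr (by exact_mod_cast hc₂.ne'))
        calc Int.gcd v (c:ℤ) ≤ Int.gcd v (c₁:ℤ) * Int.gcd v (c₂:ℤ) :=
              Nat.le_of_dvd (Nat.mul_pos hg1pos hg2pos) hdd
          _ ≤ Int.gcd v (c₁:ℤ) * c₂ := Nat.mul_le_mul_left _ hg2
      exact le_trans (le_trans (Finset.card_le_card hsub) (sol_card_le c v u)) hgcdmul
    calc ‖∑ x ∈ Finset.univ.filter (fun x : ZMod c => IsUnit x),
          (if x * (v : ZMod c) = (u : ZMod c) then (c : ℂ) * Gx c A B C u x else 0)‖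
        ≤ ∑ x ∈ Finset.univ.filter (fun x : ZMod c => IsUnit x),
            ‖if x * (v : ZMod c) = (u : ZMod c) then (c : ℂ) * Gx c A B C u x else 0‖ :=
          norm_sum_le _ _
      _ ≤ ∑ x ∈ Finset.univ.filter (fun x : ZMod c => IsUnit x),
            (if x * (v : ZMod c) = (u : ZMod c) then (c : ℝ) * M else 0) := by
          refine Finset.sum_le_sum fun x hx => ?_
          by_cases hcond : x * (v : ZMod c) = (u : ZMod c)
          · rw [if_pos hcond, if_pos hcond, norm_mul, Complex.norm_natCast]
            exact mul_le_mul_of_nonneg_left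
              (Gx_bound A B C u hA c x (Finset.mem_filter.mp hx).2) (Nat.cast_nonneg c)
          · rw [if_neg hcond, if_neg hcond, norm_zero]
      _ = (((Finset.univ.filter (fun x : ZMod c => IsUnit x)).filter
            (fun x : ZMod c => x * (v : ZMod c) = (u : ZMod c))).card : ℝ) * ((c:ℝ) * M) := by
          rw [← Finset.sum_filter, Finset.sum_const, nsmul_eq_mul]
      _ ≤ ((Int.gcd v (c₁:ℤ) * c₂ : ℕ) : ℝ) * ((c:ℝ) * M) := by
          have hcM : 0 ≤ (c:ℝ) * M := by positivity
          exact mul_le_mul_of_nonneg_right (by exact_mod_cast hcard) hcM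
      _ ≤ Real.sqrt (2 * A.natAbs) * (Int.gcd v (c₁ : ℤ) : ℝ) * (c₁ : ℝ) ^ ((3 : ℝ) / 2) *
            (c₂ : ℝ) ^ ((5 : ℝ) / 2 + ε) := by
          have hcR : (c:ℝ) = (c₁:ℝ) * (c₂:ℝ) := by rw [hsplit]; push_cast; ring
          have hMs : M = Real.sqrt (c₁:ℝ) * Real.sqrt (c₂:ℝ) * Real.sqrt (2 * A.natAbs) := by
            rw [hM, hcR, Real.sqrt_mul (by positivity), Real.sqrt_mul (by positivity)]
          have heq : ((Int.gcd v (c₁:ℤ) * c₂ : ℕ) : ℝ) * ((c:ℝ) * M) =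
              Real.sqrt (2 * A.natAbs) * (Int.gcd v (c₁ : ℤ) : ℝ) * (c₁ : ℝ) ^ ((3 : ℝ) / 2) *
                (c₂ : ℝ) ^ ((5 : ℝ) / 2) := by
            rw [rpow_3half c₁ hc₁, rpow_5half c₂ hc₂, hMs, hcR]
            push_cast
            ring
          rw [heq]
          have hexp : (c₂ : ℝ) ^ ((5 : ℝ) / 2) ≤ (c₂ : ℝ) ^ ((5 : ℝ) / 2 + ε) :=
            Real.rpow_le_rpow_of_exponent_le (by exact_mod_cast hc₂) (by linarith)
          have hpre : 0 ≤ Real.sqrt (2 * A.natAbs) * (Int.gcd v (c₁ : ℤ) : ℝ) *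
              (c₁ : ℝ) ^ ((3 : ℝ) / 2) := by positivity
          exact mul_le_mul_of_nonneg_left hexp hpre
end

section
/- Let γ, B, C, u, v be integers and let c be a positive integer with gcd(4γ, c) = 1. If gcd(v, c) does not divide u, then S_c^{B,C}(γ; u, v) = 0. -/
lemma sum_range_zmod {c : ℕ} [NeZero c] {M : Type*} [AddCommMonoid M] (f : ℕ → M) :
    ∑ a ∈ Finset.range c, f a = ∑ a : ZMod c, f a.val := by
  refine Finset.sum_nbij' (fun a => (a : ZMod c)) (fun z => z.val)
    (fun a _ => Finset.mem_univ _) (fun z _ => Finset.mem_range.mpr (ZMod.val_lt z))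
    (fun a ha => ZMod.val_cast_of_lt (Finset.mem_range.mp ha))
    (fun z _ => ZMod.natCast_zmod_val z)
    (fun a ha => by rw [ZMod.val_cast_of_lt (Finset.mem_range.mp ha)])

lemma eC_eq_stdAddChar {c : ℕ} [NeZero c] (t : ℤ) :
    eC c t = ZMod.stdAddChar (t : ZMod c) :=
  (ZMod.stdAddChar_coe t).symm

lemma sum_stdAddChar_mul {c : ℕ} [NeZero c] {w : ZMod c} (hw : w ≠ 0) :
    ∑ b : ZMod c, ZMod.stdAddChar (b * w) = 0 := by
  have := AddChar.sum_mulShift w (ZMod.isPrimitive_stdAddChar c)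
  simpa [hw] using this

/-- If `gcd(4γ, c) = 1` and `gcd(v, c) ∤ u`, then `S_c^{B,C}(γ; u, v) = 0`. -/
theorem statement1 (γ B C u v : ℤ) (c : ℕ) (hc : 0 < c)
    (hgcd : Int.gcd (4 * γ) (c : ℤ) = 1)
    (hndvd : ¬ ((Int.gcd v (c : ℤ) : ℤ) ∣ u)) :
    Sbc γ B C u v c = 0 := by
  haveI : NeZero c := ⟨hc.ne'⟩
  classical
  set ψ : AddChar (ZMod c) ℂ := ZMod.stdAddChar with hψdef
  set F : Finset ℕ := (Finset.range c).filter (fun x => Nat.Coprime x c) with hF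
  set G : ZMod c := (γ : ZMod c) with hG
  set Bz : ZMod c := (B : ZMod c) with hBz
  set Cz : ZMod c := (C : ZMod c) with hCz
  set uz : ZMod c := (u : ZMod c) with huz
  set vz : ZMod c := (v : ZMod c) with hvz
  -- the full exponent as a function on `ZMod c`
  set E : ℕ → ZMod c → ZMod c → ZMod c := fun x a b =>
    (x : ZMod c) * (G * a ^ 2 + Bz * a + Cz) + (x : ZMod c)⁻¹ * (G * b ^ 2 + Bz * b + Cz)
      + 2 * G * a * b + a * (Bz + uz) + b * (Bz + vz) with hE
  have hterm : ∀ a b : ZMod c,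
      Kl (γ * ((a.val : ℕ) : ℤ) ^ 2 + B * ((a.val : ℕ) : ℤ) + C)
          (γ * ((b.val : ℕ) : ℤ) ^ 2 + B * ((b.val : ℕ) : ℤ) + C) c *
        eC c (2 * γ * ((a.val : ℕ) : ℤ) * ((b.val : ℕ) : ℤ) + ((a.val : ℕ) : ℤ) * (B + u)
          + ((b.val : ℕ) : ℤ) * (B + v))
      = ∑ x ∈ F, ψ (E x a b) := by
    intro a b
    rw [Kl, Finset.sum_mul]
    refine Finset.sum_congr rfl fun x hx => ?_
    rw [eC_eq_stdAddChar, eC_eq_stdAddChar, ← AddChar.map_add_eq_mul]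
    congr 1
    simp only [hE, hG, hBz, hCz, huz, hvz]
    push_cast [ZMod.natCast_zmod_val]
    ring
  have step1 : Sbc γ B C u v c = ∑ x ∈ F, ∑ b : ZMod c, ∑ a : ZMod c, ψ (E x a b) := by
    rw [Sbc]
    rw [sum_range_zmod]
    calc (∑ a : ZMod c, ∑ b ∈ Finset.range c,
          Kl (γ * ((a.val : ℕ) : ℤ) ^ 2 + B * ((a.val : ℕ) : ℤ) + C)
            (γ * ((b : ℕ) : ℤ) ^ 2 + B * ((b : ℕ) : ℤ) + C) c *
          eC c (2 * γ * ((a.val : ℕ) : ℤ) * ((b : ℕ) : ℤ) + ((a.val : ℕ) : ℤ) * (B + u)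
            + ((b : ℕ) : ℤ) * (B + v)))
        = ∑ a : ZMod c, ∑ b : ZMod c, ∑ x ∈ F, ψ (E x a b) := by
          refine Finset.sum_congr rfl fun a _ => ?_
          rw [sum_range_zmod]
          exact Finset.sum_congr rfl fun b _ => hterm a b
      _ = ∑ b : ZMod c, ∑ x ∈ F, ∑ a : ZMod c, ψ (E x a b) := by
          rw [Finset.sum_comm]
          exact Finset.sum_congr rfl fun b _ => Finset.sum_comm
      _ = ∑ x ∈ F, ∑ b : ZMod c, ∑ a : ZMod c, ψ (E x a b) := Finset.sum_comm
  rw [step1]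
  refine Finset.sum_eq_zero fun x hx => ?_
  have hcop : Nat.Coprime x c := (Finset.mem_filter.mp hx).2
  set X : ZMod c := (x : ZMod c) with hX
  set Y : ZMod c := X⁻¹ with hY
  have hXY : X * Y = 1 := ZMod.coe_mul_inv_eq_one x hcop
  set w : ZMod c := vz - Y * uz with hw
  have hwne : w ≠ 0 := by
    intro h0
    have hv : vz = Y * uz := by rwa [hw, sub_eq_zero] at h0
    have hu : ((u : ℤ) : ZMod c) = (((x : ℤ) * v : ℤ) : ZMod c) := by
      have : X * vz = uz := by rw [hv, ← mul_assoc, hXY, one_mul]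
      rw [huz] at this
      rw [← this, hvz, hX]
      push_cast
      ring
    have hdvd : (c : ℤ) ∣ (x : ℤ) * v - u := (ZMod.intCast_eq_intCast_iff_dvd_sub _ _ _).mp hu
    have hd1 : ((Int.gcd v (c : ℤ) : ℤ)) ∣ v := Int.gcd_dvd_left _ _
    have hd2 : ((Int.gcd v (c : ℤ) : ℤ)) ∣ (c : ℤ) := Int.gcd_dvd_right _ _
    exact hndvd (by
      have : ((Int.gcd v (c : ℤ) : ℤ)) ∣ (x : ℤ) * v - u := hd2.trans hdvd
      have h2 : ((Int.gcd v (c : ℤ) : ℤ)) ∣ (x : ℤ) * v := hd1.mul_left _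
      simpa using h2.sub this)
  -- the `a`-independent part of the exponent after substitution
  set A : ZMod c → ZMod c := fun a => X * (G * a ^ 2 + Bz * a + Cz) + Y * Cz + a * (Bz + uz)
    with hA
  have hsub : ∀ b a : ZMod c, E x (a - Y * b) b = A a + b * w := by
    intro b a
    simp only [hE, hA, hw, ← hX, ← hY]
    ring_nf
    linear_combination (-(2 * G * a * b) + Y * G * b ^ 2 - Bz * b) * hXY
  calc ∑ b : ZMod c, ∑ a : ZMod c, ψ (E x a b)
      = ∑ b : ZMod c, ∑ a : ZMod c, ψ (E x (a - Y * b) b) := by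
        refine Finset.sum_congr rfl fun b _ => ?_
        exact (Fintype.sum_equiv (Equiv.subRight (Y * b)) _ _ fun a => rfl).symm
    _ = ∑ b : ZMod c, (∑ a : ZMod c, ψ (A a)) * ψ (b * w) := by
        refine Finset.sum_congr rfl fun b _ => ?_
        rw [Finset.sum_mul]
        exact Finset.sum_congr rfl fun a _ => by
          rw [hsub b a, AddChar.map_add_eq_mul]
    _ = (∑ a : ZMod c, ψ (A a)) * ∑ b : ZMod c, ψ (b * w) := by rw [Finset.mul_sum]
    _ = 0 := by rw [sum_stdAddChar_mul hwne, mul_zero]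
end

section
/- There is an absolute constant C > 0 such that for all integers γ, B, C, u, v and every positive integer c with gcd(4γ, c) = 1 and gcd(v, c) ∣ u, one has |S_c^{B,C}(γ; u, v)| ≤ C · gcd(v, c) · c^{3/2}. -/
namespace SbcAux

lemma eC_add {n : ℕ} (hn : n ≠ 0) (s t : ℤ) : eC n (s + t) = eC n s * eC n t := by
  rw [eC, eC, eC, ← Complex.exp_add]
  congr 1
  have : (n : ℂ) ≠ 0 := Nat.cast_ne_zero.2 hn
  field_simp
  simp

lemma eC_int_mul {n : ℕ} (k : ℤ) : eC n ((n : ℤ) * k) = 1 := by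
  rcases Nat.eq_zero_or_pos n with h | h
  · subst h; simp [eC]
  · have hn : (n : ℂ) ≠ 0 := Nat.cast_ne_zero.2 h.ne'
    rw [eC]
    have h2 : ((((n : ℤ) * k) : ℤ) : ℂ) = (n : ℂ) * (k : ℂ) := by push_cast; ring
    rw [h2]
    have : 2 * (Real.pi : ℂ) * Complex.I * ((n : ℂ) * k) / n = k * (2 * Real.pi * Complex.I) := by
      field_simp
    rw [this, Complex.exp_int_mul_two_pi_mul_I]

lemma eC_congr {n : ℕ} (hn : n ≠ 0) {s t : ℤ} (h : (s : ZMod n) = (t : ZMod n)) :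
    eC n s = eC n t := by
  have : (n : ℤ) ∣ s - t := by
    rwa [← ZMod.intCast_zmod_eq_zero_iff_dvd, Int.cast_sub, sub_eq_zero]
  obtain ⟨k, hk⟩ := this
  have : s = t + (n : ℤ) * k := by linarith
  rw [this, eC_add hn, eC_int_mul, mul_one]

lemma abs_eC {n : ℕ} (hn : n ≠ 0) (t : ℤ) : ‖eC n t‖ = 1 := by
  have : (2 * (Real.pi : ℂ) * Complex.I * t / n) = ((2 * Real.pi * t / n : ℝ) : ℂ) * Complex.I := by
    push_cast; ring
  rw [eC, this, Complex.norm_exp_ofReal_mul_I]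

lemma conj_eC {n : ℕ} (t : ℤ) :
    (starRingEnd ℂ) (eC n t) = eC n (-t) := by
  rw [eC, eC, ← Complex.exp_conj]
  congr 1
  simp only [map_div₀, map_mul, Complex.conj_I, Complex.conj_ofReal, map_intCast,
    map_natCast, map_ofNat]
  push_cast
  ring

variable {n : ℕ} [NeZero n]

/-- The standard character as a function of `ZMod n`. -/
noncomputable def E (n : ℕ) [NeZero n] (z : ZMod n) : ℂ := eC n (z.val : ℤ)

lemma nzero : n ≠ 0 := NeZero.ne n

lemma E_intCast (t : ℤ) : E n ((t : ZMod n)) = eC n t := by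
  apply eC_congr (NeZero.ne n)
  push_cast [ZMod.natCast_val, ZMod.cast_id]
  rfl

lemma E_natCast (t : ℕ) : E n ((t : ZMod n)) = eC n t := by
  have := E_intCast (n := n) (t : ℤ)
  rwa [Int.cast_natCast] at this

lemma E_add (y z : ZMod n) : E n (y + z) = E n y * E n z := by
  have h1 : E n (y + z) = eC n ((y.val : ℤ) + z.val) := by
    apply eC_congr (NeZero.ne n)
    push_cast [ZMod.natCast_val, ZMod.cast_id]
    rfl
  rw [h1, eC_add (NeZero.ne n)]; rfl

lemma E_zero : E n 0 = 1 := by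
  simp [E, ZMod.val_zero, eC]

lemma abs_E (z : ZMod n) : ‖E n z‖ = 1 := abs_eC (NeZero.ne n) _

lemma conj_E (z : ZMod n) : (starRingEnd ℂ) (E n z) = E n (-z) := by
  rw [E, conj_eC]
  apply eC_congr (NeZero.ne n)
  push_cast [ZMod.natCast_val, ZMod.cast_id]
  rfl

lemma E_ne_one {z : ZMod n} (hz : z ≠ 0) : E n z ≠ 1 := by
  intro h
  rw [E, eC, Complex.exp_eq_one_iff] at h
  obtain ⟨k, hk⟩ := h
  have hn : (n : ℂ) ≠ 0 := Nat.cast_ne_zero.2 (NeZero.ne n)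
  have hpi : (Real.pi : ℂ) ≠ 0 := by exact_mod_cast Real.pi_ne_zero
  have hI := Complex.I_ne_zero
  rw [div_eq_iff hn] at hk
  have h3 : (((z.val : ℤ) : ℂ)) = ((k * (n : ℤ) : ℤ) : ℂ) := by
    refine mul_left_cancel₀ (a := 2 * (Real.pi : ℂ) * Complex.I) (by simp [hpi, hI]) ?_
    push_cast
    linear_combination hk
  have h4 : (z.val : ℤ) = k * (n : ℤ) := by exact_mod_cast h3
  have hlt : (z.val : ℤ) < (n : ℤ) := by exact_mod_cast ZMod.val_lt z
  have hge : (0 : ℤ) ≤ (z.val : ℤ) := by positivity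
  have hnpos : (0 : ℤ) < (n : ℤ) := by
    exact_mod_cast Nat.pos_of_ne_zero (NeZero.ne n)
  have hk0 : k = 0 := by
    rcases lt_trichotomy k 0 with h' | h' | h'
    · nlinarith
    · exact h'
    · nlinarith
  rw [hk0, zero_mul] at h4
  have : z.val = 0 := by exact_mod_cast h4
  exact hz ((ZMod.val_eq_zero z).1 this)

lemma sum_E (m : ZMod n) :
    ∑ z : ZMod n, E n (z * m) = if m = 0 then (n : ℂ) else 0 := by
  split_ifs with h
  · subst h
    simp only [mul_zero, E_zero]
    simp [Finset.card_univ, ZMod.card]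
  · have key : E n m * ∑ z : ZMod n, E n (z * m) = ∑ z : ZMod n, E n (z * m) := by
      rw [Finset.mul_sum]
      refine Fintype.sum_equiv (Equiv.addRight 1) _ _ (fun z => ?_)
      show E n m * E n (z * m) = E n ((z + 1) * m)
      rw [← E_add]
      congr 1
      ring
    have h2 : (E n m - 1) * (∑ z : ZMod n, E n (z * m)) = 0 := by
      rw [sub_mul, one_mul, key, sub_self]
    rcases mul_eq_zero.1 h2 with h3 | h3
    · exact absurd (sub_eq_zero.1 h3) (E_ne_one h)
    · exact h3

lemma sum_range_eq (f : ℕ → ℂ) : ∑ i ∈ Finset.range n, f i = ∑ z : ZMod n, f z.val := by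
  refine Finset.sum_nbij' (fun i => (i : ZMod n)) (fun z => z.val) ?_ ?_ ?_ ?_ ?_
  · intros; exact Finset.mem_univ _
  · intro z _; exact Finset.mem_range.2 (ZMod.val_lt z)
  · intro i hi; exact ZMod.val_cast_of_lt (Finset.mem_range.1 hi)
  · intro z _; exact ZMod.natCast_rightInverse z
  · intro i hi; rw [ZMod.val_cast_of_lt (Finset.mem_range.1 hi)]

lemma Kl_eq_units (m m' : ℤ) :
    Kl m m' n = ∑ ω : (ZMod n)ˣ, E n ((m : ZMod n) * (ω : ZMod n) + (m' : ZMod n) * ((ω⁻¹ : (ZMod n)ˣ) : ZMod n)) := by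
  rw [Kl]
  symm
  refine Finset.sum_bij (fun (ω : (ZMod n)ˣ) _ => (ω : ZMod n).val) ?_ ?_ ?_ ?_
  · intro ω _
    exact Finset.mem_filter.2 ⟨Finset.mem_range.2 (ZMod.val_lt _), ZMod.val_coe_unit_coprime ω⟩
  · intro ω₁ _ ω₂ _ h
    ext
    have := congrArg (fun t : ℕ => (t : ZMod n)) h
    simpa [ZMod.natCast_rightInverse _] using this
  · intro x hx
    obtain ⟨hx1, hx2⟩ := Finset.mem_filter.1 hx
    refine ⟨ZMod.unitOfCoprime x hx2, Finset.mem_univ _, ?_⟩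
    show ((ZMod.unitOfCoprime x hx2 : (ZMod n)ˣ) : ZMod n).val = x
    rw [ZMod.coe_unitOfCoprime, ZMod.val_cast_of_lt (Finset.mem_range.1 hx1)]
  · intro ω _
    rw [← E_intCast]
    apply congrArg
    push_cast [ZMod.natCast_val, ZMod.cast_id, ZMod.inv_coe_unit]
    rfl

/-- quadratic shift lemma -/
lemma quad_shift (w r κ t : ZMod n) (ht : 2 * w * t = -r) :
    ∑ a : ZMod n, E n (w * a ^ 2 + r * a + κ)
      = E n (w * t ^ 2 + r * t + κ) * ∑ a : ZMod n, E n (w * a ^ 2) := by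
  have step1 : ∑ a : ZMod n, E n (w * a ^ 2 + r * a + κ)
      = ∑ a : ZMod n, E n (w * (a + t) ^ 2 + r * (a + t) + κ) := by
    exact (Fintype.sum_equiv (Equiv.addRight t)
      (fun a => E n (w * (a + t) ^ 2 + r * (a + t) + κ))
      (fun a => E n (w * a ^ 2 + r * a + κ)) (fun a => rfl)).symm
  rw [step1, Finset.mul_sum]
  refine Finset.sum_congr rfl fun a _ => ?_
  rw [← E_add]
  congr 1
  linear_combination a * ht

/-- Gauss sum modulus -/
lemma gauss_abs {w : ZMod n} (hw : IsUnit (2 * w)) :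
    ‖∑ a : ZMod n, E n (w * a ^ 2)‖ = Real.sqrt n := by
  have hsq : (∑ a : ZMod n, E n (w * a ^ 2)) * (starRingEnd ℂ) (∑ a : ZMod n, E n (w * a ^ 2))
      = (n : ℂ) := by
    rw [map_sum, Finset.sum_mul_sum]
    have step1 : ∀ b : ZMod n, ∑ a : ZMod n, E n (w * a ^ 2) * (starRingEnd ℂ) (E n (w * b ^ 2))
        = ∑ h : ZMod n, E n (w * h ^ 2) * E n (b * (2 * w * h)) := by
      intro b
      refine (Fintype.sum_equiv (Equiv.addLeft b)
        (fun h => E n (w * h ^ 2) * E n (b * (2 * w * h)))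
        (fun a => E n (w * a ^ 2) * (starRingEnd ℂ) (E n (w * b ^ 2))) (fun h => ?_)).symm
      show E n (w * h ^ 2) * E n (b * (2 * w * h))
          = E n (w * (b + h) ^ 2) * (starRingEnd ℂ) (E n (w * b ^ 2))
      rw [conj_E, ← E_add, ← E_add]
      congr 1
      ring
    calc ∑ a : ZMod n, ∑ b : ZMod n, E n (w * a ^ 2) * (starRingEnd ℂ) (E n (w * b ^ 2))
        = ∑ b : ZMod n, ∑ a : ZMod n, E n (w * a ^ 2) * (starRingEnd ℂ) (E n (w * b ^ 2)) :=
          Finset.sum_comm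
      _ = ∑ b : ZMod n, ∑ h : ZMod n, E n (w * h ^ 2) * E n (b * (2 * w * h)) := by
          exact Finset.sum_congr rfl fun b _ => step1 b
      _ = ∑ h : ZMod n, ∑ b : ZMod n, E n (w * h ^ 2) * E n (b * (2 * w * h)) :=
          Finset.sum_comm
      _ = ∑ h : ZMod n, E n (w * h ^ 2) * (if (2 * w * h) = 0 then (n : ℂ) else 0) := by
          refine Finset.sum_congr rfl fun h _ => ?_
          rw [← Finset.mul_sum, sum_E]
      _ = ∑ h : ZMod n, (if h = 0 then E n (w * h ^ 2) * (n : ℂ) else 0) := by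
          refine Finset.sum_congr rfl fun h _ => ?_
          have : (2 * w * h = 0) ↔ (h = 0) := hw.mul_right_eq_zero
          by_cases hh : h = 0
          · rw [if_pos hh, if_pos (this.2 hh)]
          · rw [if_neg hh, if_neg (fun c => hh (this.1 c)), mul_zero]
      _ = E n (w * 0 ^ 2) * (n : ℂ) := by rw [Finset.sum_ite_eq' Finset.univ 0]; simp
      _ = (n : ℂ) := by
          rw [show w * (0 : ZMod n) ^ 2 = 0 by ring, E_zero, one_mul]
  have hns : Complex.normSq (∑ a : ZMod n, E n (w * a ^ 2)) = (n : ℝ) := by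
    have := Complex.mul_conj (∑ a : ZMod n, E n (w * a ^ 2))
    rw [this] at hsq
    exact_mod_cast hsq
  rw [Complex.norm_def, hns]

/-- counting lemma -/
lemma count_le (hn : 0 < n) (A D : ℤ) :
    (Finset.univ.filter fun z : ZMod n => (A : ZMod n) * z = (D : ZMod n)).card
      ≤ Int.gcd A n := by
  set S := Finset.univ.filter fun z : ZMod n => (A : ZMod n) * z = (D : ZMod n) with hS
  set d := Int.gcd A (n : ℤ) with hd
  have hdn : d ∣ n := by
    have := Int.gcd_dvd_right (a := A) (b := (n : ℤ))
    exact_mod_cast this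
  have hd0 : 0 < d := by
    rcases Nat.eq_zero_or_pos d with h | h
    · exfalso
      have := Int.natAbs_dvd.2 (Int.gcd_dvd_right (a := A) (b := (n : ℤ)))
      rw [← hd] at *
      have hn' : (d : ℤ) ∣ (n : ℤ) := Int.gcd_dvd_right _ _
      rw [h] at hn'
      simp at hn'
      omega
    · exact h
  set q := n / d with hq
  have hqd : q * d = n := Nat.div_mul_cancel hdn
  have hq0 : 0 < q := by
    rcases Nat.eq_zero_or_pos q with h | h
    · exfalso; rw [h, zero_mul] at hqd; omega
    · exact h
  -- key divisibility
  have key : ∀ z₁ ∈ S, ∀ z₂ ∈ S, (q : ℤ) ∣ ((z₁.val : ℤ) - (z₂.val : ℤ)) := by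
    intro z₁ hz₁ z₂ hz₂
    have h1 := (Finset.mem_filter.1 hz₁).2
    have h2 := (Finset.mem_filter.1 hz₂).2
    have hsub : ((A * ((z₁.val : ℤ) - (z₂.val : ℤ)) : ℤ) : ZMod n) = 0 := by
      push_cast [ZMod.natCast_val, ZMod.cast_id]
      rw [mul_sub, h1, h2, sub_self]
    have hdvd : (n : ℤ) ∣ A * ((z₁.val : ℤ) - (z₂.val : ℤ)) :=
      (ZMod.intCast_zmod_eq_zero_iff_dvd _ n).1 hsub
    -- write A = d * A', n = d * q
    have hdA : (d : ℤ) ∣ A := Int.gcd_dvd_left _ _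
    obtain ⟨A', hA'⟩ := hdA
    have hn_eq : (n : ℤ) = (d : ℤ) * (q : ℤ) := by exact_mod_cast (mul_comm q d ▸ hqd).symm
    have hdvd' : (q : ℤ) ∣ A' * ((z₁.val : ℤ) - (z₂.val : ℤ)) := by
      rcases hdvd with ⟨e, he⟩
      refine ⟨e, ?_⟩
      have hd' : (d : ℤ) ≠ 0 := by exact_mod_cast hd0.ne'
      apply mul_left_cancel₀ hd'
      rw [← mul_assoc]
      linear_combination he + ((z₁.val : ℤ) - (z₂.val : ℤ)) * hA'.symm + e * hn_eq
    have hcop : Int.gcd A' (q : ℤ) = 1 := by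
      have := Int.gcd_div_gcd_div_gcd (i := A) (j := (n : ℤ)) (by exact_mod_cast hd0)
      have hA'' : A / (d : ℤ) = A' := by
        rw [hA']; exact Int.mul_ediv_cancel_left _ (by exact_mod_cast hd0.ne')
      have hq'' : (n : ℤ) / (d : ℤ) = (q : ℤ) := by
        rw [hn_eq]; exact Int.mul_ediv_cancel_left _ (by exact_mod_cast hd0.ne')
      rwa [← hd, hA'', hq''] at this
    exact Int.dvd_of_dvd_mul_right_of_gcd_one hdvd' (by rwa [Int.gcd_comm] at hcop)
  -- injection into range d
  have := Finset.card_le_card_of_injOn (s := S) (f := fun z : ZMod n => z.val / q)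
    (t := Finset.range d) ?_ ?_
  · simpa using this
  · intro z hz
    refine Finset.mem_range.2 ?_
    have h' : z.val < q * d := by rw [hqd]; exact ZMod.val_lt z
    exact Nat.div_lt_of_lt_mul h'
  · intro z₁ hz₁ z₂ hz₂ hdiv
    have hmod : z₁.val % q = z₂.val % q := by
      have h1 : z₂.val ≡ z₁.val [MOD q] :=
        (Nat.modEq_iff_dvd).2 (by exact_mod_cast key z₁ hz₁ z₂ hz₂)
      exact h1.symm
    have hdiv2 : z₁.val / q = z₂.val / q := by simpa using hdiv
    have : z₁.val = z₂.val := by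
      calc z₁.val = q * (z₁.val / q) + z₁.val % q := (Nat.div_add_mod _ _).symm
        _ = q * (z₂.val / q) + z₂.val % q := by rw [hdiv2, hmod]
        _ = z₂.val := Nat.div_add_mod _ _
    exact ZMod.val_injective n this

lemma isUnit_of_gcd_eq_one {n : ℕ} [NeZero n] {t : ℤ} (h : Int.gcd t (n : ℤ) = 1) :
    IsUnit ((t : ZMod n)) := by
  obtain ⟨a, b, hab⟩ := Int.isCoprime_iff_gcd_eq_one.mpr h
  refine IsUnit.of_mul_eq_one ((a : ZMod n)) ?_
  have hc : ((a * t + b * (n : ℤ) : ℤ) : ZMod n) = ((1 : ℤ) : ZMod n) := by rw [hab]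
  push_cast at hc
  rw [ZMod.natCast_self] at hc
  linear_combination hc

lemma main_bound {n : ℕ} (hn : 0 < n) (γ B C u v : ℤ)
    (h4 : Int.gcd (4 * γ) (n : ℤ) = 1) :
    ‖Sbc γ B C u v n‖ ≤ (Int.gcd v (n : ℤ) : ℝ) * ((n : ℝ) * Real.sqrt n) := by
  haveI : NeZero n := ⟨hn.ne'⟩
  set g : ZMod n := ((γ : ℤ) : ZMod n) with hg
  set β : ZMod n := ((B : ℤ) : ZMod n) with hβ
  set Cz : ZMod n := ((C : ℤ) : ZMod n) with hCz
  set U : ZMod n := ((u : ℤ) : ZMod n) with hU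
  set V : ZMod n := ((v : ℤ) : ZMod n) with hV
  -- units
  have h4g : IsUnit ((4 : ZMod n) * g) := by
    have h := isUnit_of_gcd_eq_one (n := n) h4
    have : (((4 * γ : ℤ)) : ZMod n) = (4 : ZMod n) * g := by push_cast [hg]; ring
    rwa [this] at h
  have h2g : IsUnit ((2 : ZMod n) * g) := by
    have : (4 : ZMod n) * g = 2 * (2 * g) := by ring
    rw [this] at h4g
    exact isUnit_of_mul_isUnit_right h4g
  have hux : ∀ ω : (ZMod n)ˣ, IsUnit (2 * (g * (ω : ZMod n))) := by
    intro ω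
    have : 2 * (g * (ω : ZMod n)) = (2 * g) * (ω : ZMod n) := by ring
    rw [this]
    exact h2g.mul ω.isUnit
  choose ι hι using fun ω => (hux ω).exists_right_inv
  -- notation
  set M : (ZMod n)ˣ → ZMod n := fun ω => V - ((ω⁻¹ : (ZMod n)ˣ) : ZMod n) * U with hM
  set G : (ZMod n)ˣ → ℂ := fun ω => ∑ a : ZMod n, E n ((g * (ω : ZMod n)) * a ^ 2) with hG
  set r : (ZMod n)ˣ → ZMod n → ZMod n :=
    fun ω b => β * (ω : ZMod n) + 2 * g * b + (β + U) with hr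
  set κ : (ZMod n)ˣ → ZMod n → ZMod n :=
    fun ω b => (ω : ZMod n) * Cz + ((ω⁻¹ : (ZMod n)ˣ) : ZMod n) * (g * b ^ 2 + β * b + Cz)
      + b * (β + V) with hκ
  set K : (ZMod n)ˣ → ZMod n := fun ω =>
    (g * (ω : ZMod n)) * (-(ι ω * r ω 0)) ^ 2 + r ω 0 * (-(ι ω * r ω 0)) + κ ω 0 with hK
  -- Step 1: rewrite Sbc as a triple sum
  have step1 : Sbc γ B C u v n = ∑ ω : (ZMod n)ˣ, ∑ b : ZMod n, ∑ a : ZMod n,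
      E n ((g * (ω : ZMod n)) * a ^ 2 + r ω b * a + κ ω b) := by
    rw [Sbc, sum_range_eq]
    have e1 : ∀ a : ZMod n,
        ∑ b ∈ Finset.range n,
          Kl (γ * (a.val : ℤ) ^ 2 + B * (a.val : ℤ) + C)
            (γ * (b : ℤ) ^ 2 + B * (b : ℤ) + C) n *
            eC n (2 * γ * (a.val : ℤ) * b + (a.val : ℤ) * (B + u) + b * (B + v))
        = ∑ b : ZMod n, ∑ ω : (ZMod n)ˣ,
            E n ((g * (ω : ZMod n)) * a ^ 2 + r ω b * a + κ ω b) := by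
      intro a
      rw [sum_range_eq]
      refine Finset.sum_congr rfl fun b _ => ?_
      rw [Kl_eq_units, Finset.sum_mul]
      refine Finset.sum_congr rfl fun ω _ => ?_
      rw [← E_intCast (n := n) (2 * γ * (a.val : ℤ) * (b.val : ℤ)
        + (a.val : ℤ) * (B + u) + (b.val : ℤ) * (B + v)), ← E_add]
      apply congrArg
      push_cast [hr, hκ, hg, hβ, hCz, hU, hV]
      simp only [ZMod.natCast_val, ZMod.cast_id]
      ring
    calc ∑ a : ZMod n, ∑ b ∈ Finset.range n,
          Kl (γ * (a.val : ℤ) ^ 2 + B * (a.val : ℤ) + C)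
            (γ * (b : ℤ) ^ 2 + B * (b : ℤ) + C) n *
            eC n (2 * γ * (a.val : ℤ) * b + (a.val : ℤ) * (B + u) + b * (B + v))
        = ∑ a : ZMod n, ∑ b : ZMod n, ∑ ω : (ZMod n)ˣ,
            E n ((g * (ω : ZMod n)) * a ^ 2 + r ω b * a + κ ω b) :=
          Finset.sum_congr rfl fun a _ => e1 a
      _ = ∑ b : ZMod n, ∑ a : ZMod n, ∑ ω : (ZMod n)ˣ,
            E n ((g * (ω : ZMod n)) * a ^ 2 + r ω b * a + κ ω b) := Finset.sum_comm
      _ = ∑ b : ZMod n, ∑ ω : (ZMod n)ˣ, ∑ a : ZMod n,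
            E n ((g * (ω : ZMod n)) * a ^ 2 + r ω b * a + κ ω b) :=
          Finset.sum_congr rfl fun b _ => Finset.sum_comm
      _ = ∑ ω : (ZMod n)ˣ, ∑ b : ZMod n, ∑ a : ZMod n,
            E n ((g * (ω : ZMod n)) * a ^ 2 + r ω b * a + κ ω b) := Finset.sum_comm
  -- Step 2: evaluate the a-sum and the b-sum
  have step2 : Sbc γ B C u v n
      = ∑ ω : (ZMod n)ˣ, E n (K ω) * (if M ω = 0 then (n : ℂ) else 0) * G ω := by
    rw [step1]
    refine Finset.sum_congr rfl fun ω _ => ?_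
    have hxy : (ω : ZMod n) * ((ω⁻¹ : (ZMod n)ˣ) : ZMod n) = 1 := by
      rw [← Units.val_mul, mul_inv_cancel, Units.val_one]
    have hstep : ∀ b : ZMod n, ∑ a : ZMod n,
        E n ((g * (ω : ZMod n)) * a ^ 2 + r ω b * a + κ ω b)
        = E n (K ω + b * M ω) * G ω := by
      intro b
      have ht : 2 * (g * (ω : ZMod n)) * (-(ι ω * r ω b)) = -(r ω b) := by
        have h := hι ω
        linear_combination (-(r ω b)) * h
      rw [quad_shift (g * (ω : ZMod n)) (r ω b) (κ ω b) (-(ι ω * r ω b)) ht]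
      have hGω : (∑ a : ZMod n, E n ((g * (ω : ZMod n)) * a ^ 2)) = G ω := rfl
      rw [hGω]
      congr 1
      apply congrArg
      simp only [hr, hκ, hK, hM]
      set x := (ω : ZMod n)
      set y := ((ω⁻¹ : (ZMod n)ˣ) : ZMod n)
      have h := hι ω
      linear_combination (2 * g * ι ω * b * (β * x + β + U) - β * b
          + 2 * g ^ 2 * ι ω * b ^ 2) * hxy
        + ((2 * g * ι ω - y) * (b * (β * x + β + U) + g * b ^ 2)) * h
    calc ∑ b : ZMod n, ∑ a : ZMod n,
          E n ((g * (ω : ZMod n)) * a ^ 2 + r ω b * a + κ ω b)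
        = ∑ b : ZMod n, E n (K ω + b * M ω) * G ω :=
          Finset.sum_congr rfl fun b _ => hstep b
      _ = (∑ b : ZMod n, E n (K ω) * E n (b * M ω)) * G ω := by
          rw [Finset.sum_mul]
          refine Finset.sum_congr rfl fun b _ => ?_
          rw [← E_add]
      _ = E n (K ω) * (if M ω = 0 then (n : ℂ) else 0) * G ω := by
          rw [← Finset.mul_sum, sum_E]
  -- Step 3: bound
  rw [step2]
  have habs : ∀ ω : (ZMod n)ˣ,
      ‖E n (K ω) * (if M ω = 0 then (n : ℂ) else 0) * G ω‖
        = (if M ω = 0 then (n : ℝ) * Real.sqrt n else 0) := by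
    intro ω
    have hGω : G ω = ∑ a : ZMod n, E n ((g * (ω : ZMod n)) * a ^ 2) := rfl
    rw [norm_mul, norm_mul, abs_E, one_mul, hGω, gauss_abs (hux ω)]
    split_ifs with h
    · rw [Complex.norm_natCast]
    · simp
  have hcard : ((Finset.univ.filter fun ω : (ZMod n)ˣ => M ω = 0).card : ℝ)
      ≤ (Int.gcd v (n : ℤ) : ℝ) := by
    have hinj : ((Finset.univ.filter fun ω : (ZMod n)ˣ => M ω = 0).card)
        ≤ (Finset.univ.filter fun z : ZMod n =>
            ((v : ℤ) : ZMod n) * z = ((u : ℤ) : ZMod n)).card := by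
      refine Finset.card_le_card_of_injOn (fun ω : (ZMod n)ˣ => (ω : ZMod n)) ?_ ?_
      · intro ω hω
        have hm : M ω = 0 := (Finset.mem_filter.1 hω).2
        simp only [hM] at hm
        have hxy : (ω : ZMod n) * ((ω⁻¹ : (ZMod n)ˣ) : ZMod n) = 1 := by
          rw [← Units.val_mul, mul_inv_cancel, Units.val_one]
        refine Finset.mem_filter.2 ⟨Finset.mem_univ _, ?_⟩
        rw [← hV, ← hU]
        linear_combination (ω : ZMod n) * hm + U * hxy
      · intro ω₁ _ ω₂ _ h
        exact Units.ext h
    calc ((Finset.univ.filter fun ω : (ZMod n)ˣ => M ω = 0).card : ℝ)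
        ≤ ((Finset.univ.filter fun z : ZMod n =>
            ((v : ℤ) : ZMod n) * z = ((u : ℤ) : ZMod n)).card : ℝ) := by exact_mod_cast hinj
      _ ≤ (Int.gcd v (n : ℤ) : ℝ) := by exact_mod_cast count_le hn v u
  calc ‖∑ ω : (ZMod n)ˣ, E n (K ω) * (if M ω = 0 then (n : ℂ) else 0) * G ω‖
      ≤ ∑ ω : (ZMod n)ˣ, ‖E n (K ω) * (if M ω = 0 then (n : ℂ) else 0) * G ω‖ :=
        norm_sum_le _ _
    _ = ∑ ω : (ZMod n)ˣ, (if M ω = 0 then (n : ℝ) * Real.sqrt n else 0) :=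
        Finset.sum_congr rfl fun ω _ => habs ω
    _ = ((Finset.univ.filter fun ω : (ZMod n)ˣ => M ω = 0).card : ℝ) * ((n : ℝ) * Real.sqrt n) := by
        rw [← Finset.sum_filter, Finset.sum_const, nsmul_eq_mul]
    _ ≤ (Int.gcd v (n : ℤ) : ℝ) * ((n : ℝ) * Real.sqrt n) := by
        have hpos : (0 : ℝ) ≤ (n : ℝ) * Real.sqrt n := by positivity
        exact mul_le_mul_of_nonneg_right hcard hpos

end SbcAux


/-- There is an absolute constant `C > 0` such that whenever `gcd(4γ, c) = 1`
and `gcd(v, c) ∣ u`, one has `|S_c^{B,C}(γ; u, v)| ≤ C · gcd(v, c) · c^{3/2}`. -/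
theorem statement2 :
    ∃ C : ℝ, 0 < C ∧
      ∀ (γ B C' u v : ℤ) (c : ℕ), 0 < c →
        Int.gcd (4 * γ) (c : ℤ) = 1 →
        ((Int.gcd v (c : ℤ) : ℤ) ∣ u) →
        ‖Sbc γ B C' u v c‖ ≤
          C * (Int.gcd v (c : ℤ) : ℝ) * (c : ℝ) ^ ((3 : ℝ) / 2) := by
  refine ⟨1, one_pos, ?_⟩
  intro γ B C' u v c hc h4 _
  have hb := SbcAux.main_bound hc γ B C' u v h4
  have hcpos : (0 : ℝ) < (c : ℝ) := by exact_mod_cast hc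
  have h32 : (c : ℝ) ^ ((3 : ℝ) / 2) = (c : ℝ) * Real.sqrt c := by
    rw [show ((3 : ℝ) / 2) = 1 + 1 / 2 by norm_num, Real.rpow_add hcpos, Real.rpow_one,
      Real.sqrt_eq_rpow]
  rw [one_mul, h32]
  calc ‖Sbc γ B C' u v c‖ ≤ (Int.gcd v (c : ℤ) : ℝ) * ((c : ℝ) * Real.sqrt c) := hb
    _ = (Int.gcd v (c : ℤ) : ℝ) * ((c : ℝ) * Real.sqrt c) := rfl
end

section
/- Let γ, B, C be integers with γ ≠ 0 and B² − 4γC ≠ 0. For every ε > 0 there is a constant C₀ > 0, depending only on ε, γ, B and C, such that for every positive integer c all of whose prime factors divide 4γ, one has ∑_{a=0}^{c−1} gcd(|γa² + Ba + C|, c) ≤ C₀ · c^{1+ε}. -/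
open Finset

lemma aux_mod_count {n m : ℕ} (hm : m ∣ n) (hm0 : 0 < m) (r : ℕ) :
    #{a ∈ Finset.range n | a % m = r} ≤ n / m := by
  classical
  have h : #{a ∈ Finset.range n | a % m = r} ≤ #(Finset.range (n / m)) := by
    apply Finset.card_le_card_of_injOn (fun a => a / m)
    · intro a ha
      simp only [Finset.mem_coe, Finset.mem_filter, Finset.mem_range] at ha ⊢
      exact Nat.div_lt_div_of_lt_of_dvd hm ha.1
    · intro a ha b hb hab
      simp only [Finset.coe_filter, Set.mem_setOf_eq, Finset.mem_range] at ha hb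
      have h1 := Nat.div_add_mod a m
      have h2 := Nat.div_add_mod b m
      simp only at hab
      rw [← h1, ← h2, hab, ha.2, hb.2]
  simpa using h

lemma aux_congr_count {n m : ℕ} (s : Finset ℕ) (hs : s ⊆ Finset.range n)
    (hm : m ∣ n) (hm0 : 0 < m)
    (hcong : ∀ a ∈ s, ∀ b ∈ s, (m:ℤ) ∣ (a:ℤ) - (b:ℤ)) :
    s.card ≤ n / m := by
  classical
  rcases s.eq_empty_or_nonempty with rfl | ⟨a₀, ha₀⟩
  · simp
  · have hsub : s ⊆ {a ∈ Finset.range n | a % m = a₀ % m} := by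
      intro a ha
      simp only [Finset.mem_filter]
      exact ⟨hs ha, Nat.modEq_iff_dvd.2 (hcong a₀ ha₀ a ha)⟩
    exact le_trans (Finset.card_le_card hsub) (aux_mod_count hm hm0 _)

lemma aux_dvd_gcd_mul_gcd {n a b : ℕ} (h : n ∣ a * b) :
    n ∣ Nat.gcd n a * Nat.gcd n b := by
  have key : Nat.gcd n a * Nat.gcd n b
      = Nat.gcd (Nat.gcd (n*n) (n*b)) (Nat.gcd (a*n) (a*b)) := by
    rw [Nat.gcd_mul_left n n b, Nat.gcd_mul_left a n b, ← Nat.gcd_mul_right]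
  rw [key]
  exact Nat.dvd_gcd (Nat.dvd_gcd (Dvd.intro n rfl) (Dvd.intro b rfl))
    (Nat.dvd_gcd (Dvd.intro_left a rfl) h)

lemma aux_sigma_le (D : ℤ) (hD : D ≠ 0) (d : ℕ) (hd : 0 < d) :
    #((Finset.range d).filter (fun x : ℕ => (d:ℤ) ∣ (x:ℤ)^2 - D)) ≤ (#d.divisors)^2 * (4 * D.natAbs) := by
  classical
  set X : Finset ℕ := (Finset.range d).filter (fun x : ℕ => (d:ℤ) ∣ (x:ℤ)^2 - D) with hX
  rcases X.eq_empty_or_nonempty with he | ⟨x₀, hx₀⟩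
  · rw [he]; simp
  obtain ⟨hx₀r, hx₀d⟩ := Finset.mem_filter.1 hx₀
  set I : Finset (ℕ × ℕ) := (d.divisors ×ˢ d.divisors).filter (fun gh => d ∣ gh.1 * gh.2) with hI
  have hcover : X ⊆ I.biUnion (fun gh =>
      X.filter (fun x : ℕ => (gh.1:ℤ) ∣ (x:ℤ) - (x₀:ℤ) ∧ (gh.2:ℤ) ∣ (x:ℤ) + (x₀:ℤ))) := by
    intro x hx
    obtain ⟨hxr, hxd⟩ := Finset.mem_filter.1 hx
    set g : ℕ := Nat.gcd d ((x:ℤ) - x₀).natAbs with hg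
    set h : ℕ := Nat.gcd d ((x:ℤ) + x₀).natAbs with hh
    have hgdvd : (g:ℤ) ∣ (x:ℤ) - x₀ :=
      Int.dvd_natAbs.1 (Int.natCast_dvd_natCast.2 (Nat.gcd_dvd_right _ _))
    have hhdvd : (h:ℤ) ∣ (x:ℤ) + x₀ :=
      Int.dvd_natAbs.1 (Int.natCast_dvd_natCast.2 (Nat.gcd_dvd_right _ _))
    have hdgh : d ∣ g * h := by
      apply aux_dvd_gcd_mul_gcd
      have hz : (d:ℤ) ∣ ((x:ℤ) - x₀) * ((x:ℤ) + x₀) := by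
        have : ((x:ℤ) - x₀) * ((x:ℤ) + x₀) = ((x:ℤ)^2 - D) - ((x₀:ℤ)^2 - D) := by ring
        rw [this]
        exact dvd_sub hxd hx₀d
      have := Int.natCast_dvd_natCast.1 (Int.dvd_natAbs.2 hz)
      rwa [Int.natAbs_mul] at this
    refine Finset.mem_biUnion.2 ⟨(g, h), ?_, ?_⟩
    · simp only [hI, Finset.mem_filter, Finset.mem_product, Nat.mem_divisors]
      exact ⟨⟨⟨Nat.gcd_dvd_left _ _, hd.ne'⟩, ⟨Nat.gcd_dvd_left _ _, hd.ne'⟩⟩, hdgh⟩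
    · exact Finset.mem_filter.2 ⟨hx, hgdvd, hhdvd⟩
  have hpair : ∀ gh ∈ I,
      #(X.filter (fun x : ℕ => (gh.1:ℤ) ∣ (x:ℤ) - (x₀:ℤ) ∧ (gh.2:ℤ) ∣ (x:ℤ) + (x₀:ℤ))) ≤ 4 * D.natAbs := by
    rintro ⟨g, h⟩ hgh
    simp only [hI, Finset.mem_filter, Finset.mem_product, Nat.mem_divisors] at hgh
    obtain ⟨⟨⟨hgd, -⟩, ⟨hhd, -⟩⟩, hdgh⟩ := hgh
    have hg0 : 0 < g := Nat.pos_of_dvd_of_pos hgd hd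
    have hh0 : 0 < h := Nat.pos_of_dvd_of_pos hhd hd
    set T : Finset ℕ := X.filter (fun x : ℕ => (g:ℤ) ∣ (x:ℤ) - (x₀:ℤ) ∧ (h:ℤ) ∣ (x:ℤ) + (x₀:ℤ)) with hT
    rcases T.eq_empty_or_nonempty with he' | ⟨x₁, hx₁⟩
    · rw [he']; simp
    obtain ⟨hx₁X, hgx₁, hhx₁⟩ := Finset.mem_filter.1 hx₁
    set L : ℕ := Nat.lcm g h with hL
    have hL0 : 0 < L := Nat.pos_of_ne_zero (Nat.lcm_ne_zero hg0.ne' hh0.ne')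
    have hLd : L ∣ d := Nat.lcm_dvd hgd hhd
    have hcard : T.card ≤ d / L := by
      apply aux_congr_count T ?_ hLd hL0
      · rintro a ha b hb
        obtain ⟨-, hga, hha⟩ := Finset.mem_filter.1 ha
        obtain ⟨-, hgb, hhb⟩ := Finset.mem_filter.1 hb
        have h1 : (g:ℤ) ∣ (a:ℤ) - b := by
          have := dvd_sub hga hgb; simpa using this
        have h2 : (h:ℤ) ∣ (a:ℤ) - b := by
          have := dvd_sub hha hhb; simpa using this
        have := Int.lcm_dvd (Int.dvd_natAbs.2 h1) (Int.dvd_natAbs.2 h2)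
        exact Int.dvd_natAbs.1 (Int.natCast_dvd_natCast.2 (by simpa [Int.lcm, hL] using this))
      · intro x hx
        exact Finset.mem_filter.1 (Finset.mem_filter.1 hx).1 |>.1
    have hGle : Nat.gcd g h ≤ 4 * D.natAbs := by
      have hG2x : ((Nat.gcd g h : ℕ):ℤ) ∣ 2 * (x₀:ℤ) := by
        have hga' : ((Nat.gcd g h : ℕ):ℤ) ∣ (x₁:ℤ) - x₀ :=
          dvd_trans (Int.natCast_dvd_natCast.2 (Nat.gcd_dvd_left _ _)) hgx₁
        have hha' : ((Nat.gcd g h : ℕ):ℤ) ∣ (x₁:ℤ) + x₀ :=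
          dvd_trans (Int.natCast_dvd_natCast.2 (Nat.gcd_dvd_right _ _)) hhx₁
        have : 2 * (x₀:ℤ) = ((x₁:ℤ) + x₀) - ((x₁:ℤ) - x₀) := by ring
        rw [this]; exact dvd_sub hha' hga'
      have hGd : ((Nat.gcd g h : ℕ):ℤ) ∣ (d:ℤ) :=
        Int.natCast_dvd_natCast.2 (dvd_trans (Nat.gcd_dvd_left _ _) hgd)
      have h4D : ((Nat.gcd g h : ℕ):ℤ) ∣ 4 * D := by
        have h1 : ((Nat.gcd g h : ℕ):ℤ) ∣ 4 * (x₀:ℤ)^2 := by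
          have : 4 * (x₀:ℤ)^2 = (2*x₀) * (2*x₀) := by ring
          rw [this]; exact Dvd.dvd.mul_right hG2x _
        have h2 : ((Nat.gcd g h : ℕ):ℤ) ∣ 4 * ((x₀:ℤ)^2 - D) :=
          Dvd.dvd.mul_left (dvd_trans hGd hx₀d) 4
        have : 4 * D = 4 * (x₀:ℤ)^2 - 4 * ((x₀:ℤ)^2 - D) := by ring
        rw [this]; exact dvd_sub h1 h2
      have h4D' : Nat.gcd g h ∣ (4 * D).natAbs :=
        Int.natCast_dvd_natCast.1 (Int.dvd_natAbs.2 h4D)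
      have : (4 * D).natAbs = 4 * D.natAbs := by
        rw [Int.natAbs_mul]; rfl
      rw [this] at h4D'
      exact Nat.le_of_dvd (by positivity) h4D'
    have hdL : d / L ≤ Nat.gcd g h := by
      have hle : d ≤ L * Nat.gcd g h := by
        have := Nat.gcd_mul_lcm g h
        calc d ≤ g * h := Nat.le_of_dvd (by positivity) hdgh
        _ = Nat.gcd g h * Nat.lcm g h := (Nat.gcd_mul_lcm g h).symm
        _ = L * Nat.gcd g h := by rw [mul_comm]
      calc d / L ≤ (L * Nat.gcd g h) / L := Nat.div_le_div_right hle
      _ = Nat.gcd g h := Nat.mul_div_cancel_left _ hL0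
    exact le_trans hcard (le_trans hdL hGle)
  calc X.card ≤ #(I.biUnion (fun gh =>
      X.filter (fun x : ℕ => (gh.1:ℤ) ∣ (x:ℤ) - (x₀:ℤ) ∧ (gh.2:ℤ) ∣ (x:ℤ) + (x₀:ℤ)))) :=
        Finset.card_le_card hcover
  _ ≤ ∑ gh ∈ I, #(X.filter (fun x : ℕ => (gh.1:ℤ) ∣ (x:ℤ) - (x₀:ℤ) ∧ (gh.2:ℤ) ∣ (x:ℤ) + (x₀:ℤ))) :=
        Finset.card_biUnion_le
  _ ≤ ∑ _gh ∈ I, 4 * D.natAbs := Finset.sum_le_sum hpair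
  _ = #I * (4 * D.natAbs) := by rw [Finset.sum_const, smul_eq_mul]
  _ ≤ (#d.divisors)^2 * (4 * D.natAbs) := by
      apply Nat.mul_le_mul_right
      calc #I ≤ #(d.divisors ×ˢ d.divisors) := Finset.card_le_card (Finset.filter_subset _ _)
      _ = (#d.divisors)^2 := by rw [Finset.card_product, sq]

lemma aux_rho_le (γ B C : ℤ) (hγ : γ ≠ 0) (d : ℕ) (hd : 0 < d) :
    #((Finset.range d).filter (fun a : ℕ => (d:ℤ) ∣ (γ*(a:ℤ)^2 + B*a + C))) ≤
      (2*γ.natAbs) *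
      #((Finset.range d).filter (fun x : ℕ => (d:ℤ) ∣ (x:ℤ)^2 - (B^2 - 4*γ*C))) := by
  classical
  set R : Finset ℕ := (Finset.range d).filter (fun a : ℕ => (d:ℤ) ∣ (γ*(a:ℤ)^2 + B*a + C)) with hR
  set Y : Finset ℕ := (Finset.range d).filter (fun x : ℕ => (d:ℤ) ∣ (x:ℤ)^2 - (B^2 - 4*γ*C)) with hY
  set φ : ℕ → ℕ := fun a => ((2*γ*a + B) % (d:ℤ)).toNat with hφ
  have hd' : (0:ℤ) < d := by exact_mod_cast hd
  have hφval : ∀ a : ℕ, ((φ a : ℕ):ℤ) = (2*γ*a + B) % (d:ℤ) := by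
    intro a
    exact Int.toNat_of_nonneg (Int.emod_nonneg _ hd'.ne')
  have hφlt : ∀ a : ℕ, φ a < d := by
    intro a
    have h1 : (2*γ*a + B) % (d:ℤ) < d := Int.emod_lt_of_pos _ hd'
    have := hφval a
    omega
  have hφdvd : ∀ a : ℕ, (d:ℤ) ∣ ((φ a : ℕ):ℤ) - (2*γ*a + B) := by
    intro a
    rw [hφval a, Int.emod_def]
    exact ⟨-( (2*γ*a + B) / d), by ring⟩
  have hmaps : ∀ a ∈ R, φ a ∈ Y := by
    intro a ha
    obtain ⟨har, had⟩ := Finset.mem_filter.1 ha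
    refine Finset.mem_filter.2 ⟨Finset.mem_range.2 (hφlt a), ?_⟩
    have key : ((φ a : ℕ):ℤ)^2 - (B^2 - 4*γ*C)
        = 4*γ*(γ*(a:ℤ)^2 + B*a + C)
          + (((φ a : ℕ):ℤ) - (2*γ*a + B)) * (((φ a : ℕ):ℤ) + (2*γ*a + B)) := by ring
    rw [key]
    exact dvd_add (Dvd.dvd.mul_left had _) (Dvd.dvd.mul_right (hφdvd a) _)
  have hfib : ∀ x ∈ Y, #(R.filter (fun a => φ a = x)) ≤ 2*γ.natAbs := by
    intro x hx
    set g : ℕ := Nat.gcd d (2*γ).natAbs with hg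
    have h2γ : (2*γ).natAbs ≠ 0 := by simpa using hγ
    have hg0 : 0 < g := Nat.gcd_pos_of_pos_right _ (Nat.pos_of_ne_zero h2γ)
    have hgd : g ∣ d := Nat.gcd_dvd_left _ _
    set m : ℕ := d / g with hm
    have hmd : m ∣ d := Nat.div_dvd_of_dvd hgd
    have hm0 : 0 < m := Nat.div_pos (Nat.le_of_dvd hd hgd) hg0
    have hcard : #(R.filter (fun a => φ a = x)) ≤ d / m := by
      apply aux_congr_count _ ?_ hmd hm0
      · intro a ha b hb
        obtain ⟨haR, hax⟩ := Finset.mem_filter.1 ha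
        obtain ⟨hbR, hbx⟩ := Finset.mem_filter.1 hb
        -- d ∣ 2γ(a - b)
        have hdab : (d:ℤ) ∣ 2*γ*((a:ℤ) - b) := by
          have h1 := hφdvd a
          have h2 := hφdvd b
          have hxeq : ((φ a : ℕ):ℤ) = ((φ b : ℕ):ℤ) := by rw [hax, hbx]
          have heq : 2*γ*((a:ℤ) - b)
              = (((φ b : ℕ):ℤ) - (2*γ*b + B)) - (((φ a : ℕ):ℤ) - (2*γ*a + B)) := by
            rw [hxeq]; ring
          rw [heq]
          exact dvd_sub h2 h1
        -- to nat
        have hnat : d ∣ (2*γ).natAbs * ((a:ℤ) - b).natAbs := by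
          have := Int.natCast_dvd_natCast.1 (Int.dvd_natAbs.2 hdab)
          rwa [Int.natAbs_mul] at this
        have hgm : d = g * m := (Nat.mul_div_cancel' hgd).symm
        set u : ℕ := (2*γ).natAbs / g with hu
        have hgu : (2*γ).natAbs = g * u := (Nat.mul_div_cancel' (Nat.gcd_dvd_right _ _)).symm
        have hco : Nat.Coprime m u := by
          have := Nat.coprime_div_gcd_div_gcd (m := d) (n := (2*γ).natAbs) hg0
          simpa [hm, hu, hg] using this
        have hmu : m ∣ u * ((a:ℤ) - b).natAbs := by
          have h' : g * m ∣ g * (u * ((a:ℤ) - b).natAbs) := by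
            rw [← hgm, ← mul_assoc, ← hgu]; exact hnat
          exact (mul_dvd_mul_iff_left hg0.ne').1 h'
        have : m ∣ ((a:ℤ) - b).natAbs := hco.dvd_of_dvd_mul_left hmu
        exact Int.dvd_natAbs.1 (Int.natCast_dvd_natCast.2 this)
      · intro a ha
        exact Finset.mem_range.2 (Finset.mem_range.1
          (Finset.mem_filter.1 (Finset.mem_filter.1 ha).1).1)
    have hdm : d / m = g := Nat.div_div_self hgd hd.ne'
    have hle : g ≤ (2*γ).natAbs :=
      Nat.le_of_dvd (Nat.pos_of_ne_zero h2γ) (Nat.gcd_dvd_right d (2*γ).natAbs)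
    have h2eq : (2*γ).natAbs = 2*γ.natAbs := by rw [Int.natAbs_mul]; rfl
    omega
  calc #R ≤ (2*γ.natAbs) * #Y := Finset.card_le_mul_card_image_of_maps_to hmaps _ hfib

lemma aux_N_le (γ B C : ℤ) (c d : ℕ) (hdc : d ∣ c) (hd : 0 < d) :
    #((Finset.range c).filter (fun a : ℕ => (d:ℤ) ∣ (γ*(a:ℤ)^2 + B*a + C))) ≤
      (c / d) * #((Finset.range d).filter (fun a : ℕ => (d:ℤ) ∣ (γ*(a:ℤ)^2 + B*a + C))) := by
  classical
  apply Finset.card_le_mul_card_image_of_maps_to (f := fun a => a % d)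
  · intro a ha
    obtain ⟨har, had⟩ := Finset.mem_filter.1 ha
    refine Finset.mem_filter.2 ⟨Finset.mem_range.2 (Nat.mod_lt _ hd), ?_⟩
    have hsub : (d:ℤ) ∣ (a:ℤ) - (a % d : ℕ) := by
      have hda : (d * (a / d) + a % d : ℕ) = a := Nat.div_add_mod a d
      have : (a:ℤ) - (a % d : ℕ) = d * ((a / d : ℕ) : ℤ) := by
        calc (a:ℤ) - (a % d : ℕ)
            = ((d * (a/d) + a % d : ℕ) : ℤ) - (a % d : ℕ) := by rw [hda]
        _ = (d:ℤ) * ((a/d : ℕ) : ℤ) := by push_cast; ring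
      rw [this]; exact Dvd.intro _ rfl
    have key : γ*((a % d : ℕ):ℤ)^2 + B*(a % d : ℕ) + C
        = (γ*(a:ℤ)^2 + B*a + C)
          - ((a:ℤ) - (a % d : ℕ)) * (γ*((a:ℤ) + (a % d : ℕ)) + B) := by ring
    rw [key]
    exact dvd_sub had (Dvd.dvd.mul_right hsub _)
  · intro r hr
    calc #((((Finset.range c).filter
          (fun a : ℕ => (d:ℤ) ∣ (γ*(a:ℤ)^2 + B*a + C)))).filter (fun a => a % d = r))
        ≤ #({a ∈ Finset.range c | a % d = r}) := by
          apply Finset.card_le_card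
          intro a ha
          obtain ⟨ha1, ha2⟩ := Finset.mem_filter.1 ha
          exact Finset.mem_filter.2 ⟨(Finset.mem_filter.1 ha1).1, ha2⟩
    _ ≤ c / d := aux_mod_count hdc hd r

lemma aux_nat_bound (γ B C : ℤ) (hγ : γ ≠ 0) (hD : B^2 - 4*γ*C ≠ 0) (c : ℕ) (hc : 0 < c) :
    ∑ a ∈ Finset.range c, Int.gcd (γ*(a:ℤ)^2 + B*a + C) (c:ℤ) ≤
      (2*γ.natAbs) * ((#c.divisors)^2 * (4 * (B^2 - 4*γ*C).natAbs)) * (#c.divisors) * c := by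
  classical
  set K : ℕ := (2*γ.natAbs) * ((#c.divisors)^2 * (4 * (B^2 - 4*γ*C).natAbs)) with hK
  have step1 : ∀ a : ℕ, Int.gcd (γ*(a:ℤ)^2 + B*a + C) (c:ℤ) ≤
      ∑ d ∈ c.divisors, if (d:ℤ) ∣ (γ*(a:ℤ)^2 + B*a + C) then d else (0:ℕ) := by
    intro a
    set g : ℕ := Int.gcd (γ*(a:ℤ)^2 + B*a + C) (c:ℤ) with hg
    have hgc : g ∣ c := by
      have h' : (g:ℤ) ∣ (c:ℤ) := Int.gcd_dvd_right _ _
      exact_mod_cast h'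
    have hgm : (g:ℤ) ∣ (γ*(a:ℤ)^2 + B*a + C) := Int.gcd_dvd_left _ _
    have hmem : g ∈ c.divisors := Nat.mem_divisors.2 ⟨hgc, hc.ne'⟩
    have := Finset.single_le_sum
      (f := fun d : ℕ => if (d:ℤ) ∣ (γ*(a:ℤ)^2 + B*a + C) then d else (0:ℕ))
      (fun d _ => Nat.zero_le _) hmem
    simpa [hgm] using this
  have h2 : ∑ a ∈ Finset.range c, Int.gcd (γ*(a:ℤ)^2 + B*a + C) (c:ℤ) ≤
      ∑ a ∈ Finset.range c, ∑ d ∈ c.divisors,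
        if (d:ℤ) ∣ (γ*(a:ℤ)^2 + B*a + C) then d else (0:ℕ) :=
    Finset.sum_le_sum (fun a _ => step1 a)
  have h3 : (∑ a ∈ Finset.range c, ∑ d ∈ c.divisors,
        if (d:ℤ) ∣ (γ*(a:ℤ)^2 + B*a + C) then d else (0:ℕ))
      = ∑ d ∈ c.divisors,
          d * #((Finset.range c).filter (fun a : ℕ => (d:ℤ) ∣ (γ*(a:ℤ)^2 + B*a + C))) := by
    rw [Finset.sum_comm]
    apply Finset.sum_congr rfl
    intro d _
    rw [← Finset.sum_filter, Finset.sum_const, smul_eq_mul, mul_comm]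
  have h4 : (∑ d ∈ c.divisors,
        d * #((Finset.range c).filter (fun a : ℕ => (d:ℤ) ∣ (γ*(a:ℤ)^2 + B*a + C))))
      ≤ ∑ _d ∈ c.divisors, K * c := by
    apply Finset.sum_le_sum
    intro d hd
    obtain ⟨hdc, -⟩ := Nat.mem_divisors.1 hd
    have hd0 : 0 < d := Nat.pos_of_dvd_of_pos hdc hc
    have ha := aux_N_le γ B C c d hdc hd0
    have hb := aux_rho_le γ B C hγ d hd0
    have hcc := aux_sigma_le (B^2 - 4*γ*C) hD d hd0
    have hττ : #d.divisors ≤ #c.divisors :=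
      Finset.card_le_card (Nat.divisors_subset_of_dvd hc.ne' hdc)
    have hsig : #((Finset.range d).filter (fun x : ℕ => (d:ℤ) ∣ (x:ℤ)^2 - (B^2 - 4*γ*C)))
        ≤ (#c.divisors)^2 * (4 * (B^2 - 4*γ*C).natAbs) :=
      le_trans hcc (Nat.mul_le_mul_right _ (Nat.pow_le_pow_left hττ 2))
    have hrho : #((Finset.range d).filter (fun a : ℕ => (d:ℤ) ∣ (γ*(a:ℤ)^2 + B*a + C))) ≤ K := by
      rw [hK]
      exact le_trans hb (Nat.mul_le_mul_left _ hsig)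
    have hN : #((Finset.range c).filter (fun a : ℕ => (d:ℤ) ∣ (γ*(a:ℤ)^2 + B*a + C)))
        ≤ (c / d) * K := le_trans ha (Nat.mul_le_mul_left _ hrho)
    have hfin : d * ((c / d) * K) = K * c := by
      rw [← mul_assoc, Nat.mul_div_cancel' hdc, mul_comm]
    exact le_trans (Nat.mul_le_mul_left _ hN) (le_of_eq hfin)
  have h5 : (∑ _d ∈ c.divisors, K * c) = K * (#c.divisors) * c := by
    rw [Finset.sum_const, smul_eq_mul]; ring
  exact le_trans h2 (le_trans (le_of_eq h3) (le_trans h4 (le_of_eq h5)))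

lemma aux_tau_le (s : Finset ℕ) (δ : ℝ) (hδ : 0 < δ) :
    ∃ M : ℝ, 0 < M ∧ ∀ c : ℕ, 0 < c → c.primeFactors ⊆ s →
      (#c.divisors : ℝ) ≤ M * (c:ℝ) ^ δ := by
  classical
  set u : ℝ := (2:ℝ) ^ δ - 1 with hu
  have h2δ : (1:ℝ) < (2:ℝ) ^ δ := Real.one_lt_rpow_iff_of_pos (by norm_num) |>.2 (Or.inl ⟨by norm_num, hδ⟩)
  have hu0 : 0 < u := by simp only [hu]; linarith
  set M₀ : ℝ := max 1 (1/u) with hM0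
  have hM0ge1 : (1:ℝ) ≤ M₀ := le_max_left _ _
  have hM0pos : 0 < M₀ := lt_of_lt_of_le one_pos hM0ge1
  refine ⟨M₀ ^ s.card, pow_pos hM0pos _, ?_⟩
  intro c hc hsub
  have key : ∀ p ∈ c.primeFactors,
      ((c.factorization p + 1 : ℕ) : ℝ) ≤ M₀ * ((p:ℝ) ^ (c.factorization p : ℕ)) ^ δ := by
    intro p hp
    have hp2 : 2 ≤ p := (Nat.prime_of_mem_primeFactors hp).two_le
    set k : ℕ := c.factorization p with hk
    have h1 : (1 : ℝ) + k * u ≤ ((2:ℝ)^δ) ^ k := by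
      have := one_add_mul_le_pow (a := u) (by linarith) k
      simpa [hu] using this
    have h2 : ((k:ℝ) + 1) ≤ M₀ * (1 + k * u) := by
      rcases le_or_gt 1 u with h | h
      · have hku : (k:ℝ) * 1 ≤ k * u := mul_le_mul_of_nonneg_left h (Nat.cast_nonneg k)
        have e1 : ((k:ℝ)+1) ≤ 1 + k*u := by linarith
        have e2 : (1:ℝ) + k*u ≤ M₀ * (1 + k*u) :=
          le_mul_of_one_le_left (by positivity) hM0ge1
        linarith
      · have hM0u : (1:ℝ) ≤ M₀ * u := by
          have h1u : (1:ℝ)/u ≤ M₀ := le_max_right _ _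
          have : (1/u) * u ≤ M₀ * u := mul_le_mul_of_nonneg_right h1u (le_of_lt hu0)
          rwa [one_div_mul_cancel hu0.ne'] at this
        have h3 : (k:ℝ) ≤ k * (M₀ * u) := le_mul_of_one_le_right (Nat.cast_nonneg k) hM0u
        have h4 : (1:ℝ) ≤ M₀ := hM0ge1
        nlinarith
    have h3 : ((2:ℝ)^δ)^k = ((2:ℝ)^k : ℝ)^δ := by
      rw [← Real.rpow_natCast ((2:ℝ)^δ) k, ← Real.rpow_natCast (2:ℝ) k,
        ← Real.rpow_mul (by norm_num : (0:ℝ) ≤ 2),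
        ← Real.rpow_mul (by norm_num : (0:ℝ) ≤ 2), mul_comm]
    have h4 : ((2:ℝ)^k : ℝ)^δ ≤ ((p:ℝ) ^ k)^δ := by
      apply Real.rpow_le_rpow (by positivity) ?_ (le_of_lt hδ)
      apply pow_le_pow_left₀ (by norm_num)
      exact_mod_cast hp2
    have h5 : M₀ * (1 + k * u) ≤ M₀ * ((p:ℝ) ^ k)^δ := by
      apply mul_le_mul_of_nonneg_left ?_ (le_of_lt hM0pos)
      calc (1:ℝ) + k * u ≤ ((2:ℝ)^δ)^k := h1
      _ = ((2:ℝ)^k : ℝ)^δ := h3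
      _ ≤ ((p:ℝ) ^ k)^δ := h4
    have : ((k + 1 : ℕ) : ℝ) = (k:ℝ) + 1 := by push_cast; ring
    rw [this]
    exact le_trans h2 h5
  have hτ : (#c.divisors : ℝ) = ∏ p ∈ c.primeFactors, ((c.factorization p + 1 : ℕ) : ℝ) := by
    rw [Nat.card_divisors hc.ne', Nat.cast_prod]
  have hstep1 : (#c.divisors : ℝ) ≤
      ∏ p ∈ c.primeFactors, (M₀ * ((p:ℝ) ^ (c.factorization p : ℕ)) ^ δ) := by
    rw [hτ]
    exact Finset.prod_le_prod (fun i _ => Nat.cast_nonneg _) key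
  have hstep2 : (∏ p ∈ c.primeFactors, (M₀ * ((p:ℝ) ^ (c.factorization p : ℕ)) ^ δ))
      = M₀ ^ (#c.primeFactors) *
        ∏ p ∈ c.primeFactors, ((p:ℝ) ^ (c.factorization p : ℕ)) ^ δ := by
    rw [Finset.prod_mul_distrib, Finset.prod_const]
  have hprodc : (∏ p ∈ c.primeFactors, ((p:ℝ) ^ (c.factorization p : ℕ))) = (c:ℝ) := by
    have hnat := Nat.factorization_prod_pow_eq_self hc.ne'
    rw [Finsupp.prod, Nat.support_factorization] at hnat
    exact_mod_cast hnat
  have hstep3 : (∏ p ∈ c.primeFactors, ((p:ℝ) ^ (c.factorization p : ℕ)) ^ δ) = (c:ℝ) ^ δ := by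
    rw [Real.finset_prod_rpow _ _ (fun i _ => by positivity) δ, hprodc]
  have hstep4 : M₀ ^ (#c.primeFactors) ≤ M₀ ^ (#s) :=
    pow_le_pow_right₀ hM0ge1 (Finset.card_le_card hsub)
  have hfinal : M₀ ^ (#c.primeFactors) * (c:ℝ) ^ δ ≤ M₀ ^ (#s) * (c:ℝ) ^ δ :=
    mul_le_mul_of_nonneg_right hstep4 (by positivity)
  calc (#c.divisors : ℝ)
      ≤ ∏ p ∈ c.primeFactors, (M₀ * ((p:ℝ) ^ (c.factorization p : ℕ)) ^ δ) := hstep1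
  _ = M₀ ^ (#c.primeFactors) * ∏ p ∈ c.primeFactors, ((p:ℝ) ^ (c.factorization p : ℕ)) ^ δ :=
      hstep2
  _ = M₀ ^ (#c.primeFactors) * (c:ℝ) ^ δ := by rw [hstep3]
  _ ≤ M₀ ^ (#s) * (c:ℝ) ^ δ := hfinal


/-- For `γ ≠ 0` and `B² − 4γC ≠ 0`, and every `ε > 0`, there is `C₀ > 0`
depending only on `ε, γ, B, C` such that for every positive integer `c` all of
whose prime factors divide `4γ`,
`∑_{a=0}^{c−1} gcd(|γa² + Ba + C|, c) ≤ C₀ · c^{1+ε}`. -/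
theorem statement7 (γ B C : ℤ) (hγ : γ ≠ 0) (hD : B ^ 2 - 4 * γ * C ≠ 0)
    (ε : ℝ) (hε : 0 < ε) :
    ∃ C₀ : ℝ, 0 < C₀ ∧
      ∀ c : ℕ, 0 < c → (∀ p : ℕ, p.Prime → p ∣ c → (p : ℤ) ∣ 4 * γ) →
        (∑ a ∈ Finset.range c,
            (Int.gcd (γ * (a : ℤ) ^ 2 + B * a + C) (c : ℤ) : ℝ)) ≤
          C₀ * (c : ℝ) ^ ((1 : ℝ) + ε) := by
  obtain ⟨M, hM, hMle⟩ := aux_tau_le ((4*γ).natAbs.primeFactors) (ε/3) (by linarith)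
  set KN : ℕ := 2*γ.natAbs*(4*(B^2-4*γ*C).natAbs) with hKN
  have hKN0 : 0 < KN := by
    have h1 : 0 < γ.natAbs := Int.natAbs_pos.2 hγ
    have h2 : 0 < (B^2-4*γ*C).natAbs := Int.natAbs_pos.2 hD
    positivity
  refine ⟨(KN:ℝ) * M^3, mul_pos (by exact_mod_cast hKN0) (pow_pos hM 3), ?_⟩
  intro c hc hdiv
  have hcR : (0:ℝ) < c := by exact_mod_cast hc
  have hsub : c.primeFactors ⊆ (4*γ).natAbs.primeFactors := by
    intro p hp
    obtain ⟨pp, pdvd, -⟩ := Nat.mem_primeFactors.1 hp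
    refine Nat.mem_primeFactors.2 ⟨pp, ?_, ?_⟩
    · exact Int.natCast_dvd_natCast.1 (Int.dvd_natAbs.2 (hdiv p pp pdvd))
    · exact Int.natAbs_ne_zero.2 (mul_ne_zero (by norm_num) hγ)
  have hτ := hMle c hc hsub
  have hτ0 : (0:ℝ) ≤ (#c.divisors : ℝ) := Nat.cast_nonneg _
  have hnat := aux_nat_bound γ B C hγ hD c hc
  have hR : ((∑ a ∈ Finset.range c, Int.gcd (γ*(a:ℤ)^2 + B*a + C) (c:ℤ) : ℕ) : ℝ)
      ≤ (((2*γ.natAbs) * ((#c.divisors)^2 * (4 * (B^2 - 4*γ*C).natAbs)) * (#c.divisors) * c : ℕ) : ℝ) :=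
    Nat.cast_le.2 hnat
  have hLHS : ((∑ a ∈ Finset.range c, Int.gcd (γ*(a:ℤ)^2 + B*a + C) (c:ℤ) : ℕ) : ℝ)
      = ∑ a ∈ Finset.range c, (Int.gcd (γ*(a:ℤ)^2 + B*a + C) (c:ℤ) : ℝ) := by
    push_cast
    rfl
  have hRHS : (((2*γ.natAbs) * ((#c.divisors)^2 * (4 * (B^2 - 4*γ*C).natAbs)) * (#c.divisors) * c : ℕ) : ℝ)
      = (KN:ℝ) * (#c.divisors : ℝ)^3 * (c:ℝ) := by
    rw [hKN]; push_cast; ring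
  rw [hLHS, hRHS] at hR
  have hτ3 : (#c.divisors : ℝ)^3 ≤ (M * (c:ℝ)^(ε/3))^3 := pow_le_pow_left₀ hτ0 hτ 3
  have hKpos : (0:ℝ) ≤ (KN:ℝ) := Nat.cast_nonneg _
  have hfinal : (KN:ℝ) * (#c.divisors:ℝ)^3 * (c:ℝ) ≤ (KN:ℝ) * (M * (c:ℝ)^(ε/3))^3 * (c:ℝ) :=
    mul_le_mul_of_nonneg_right (mul_le_mul_of_nonneg_left hτ3 hKpos) (le_of_lt hcR)
  have hexp : (KN:ℝ) * (M * (c:ℝ)^(ε/3))^3 * (c:ℝ) = (KN:ℝ) * M^3 * (c:ℝ)^((1:ℝ)+ε) := by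
    rw [mul_pow]
    have e1 : ((c:ℝ)^(ε/3))^(3:ℕ) = (c:ℝ)^ε := by
      rw [← Real.rpow_natCast ((c:ℝ)^(ε/3)) 3, ← Real.rpow_mul (le_of_lt hcR)]
      norm_num
    have e2 : (c:ℝ)^((1:ℝ)+ε) = (c:ℝ) * (c:ℝ)^ε := by
      rw [Real.rpow_add hcR, Real.rpow_one]
    rw [e1, e2]; ring
  rw [hexp] at hfinal
  exact le_trans hR hfinal
end

section
/- Let l > 1, let ψ : ℝ → ℂ be a bounded function vanishing outside the interval (1/l, l), let u : ℝ → ℂ be a bounded function vanishing outside [−1.1, 1.1], and let q(x) = Ax² + Bx + C with real coefficients and A ≠ 0. Then there is a constant C₀ > 0, depending only on l and the sup-norm of u, such that for all θ ∈ (0, 1], all real K ≥ 1 and all real X ≥ 1: (1/X) · | ∑ u((k−K)/K^θ) · ψ(r₁/X) · ψ(r₂/X) | ≤ C₀ · K^θ · ‖ψ‖_∞², where the sum runs over all triples of positive integers (r₁, r₂, k) with k even and |q(r₁)| = |q(r₂)| (only finitely many terms are nonzero, by the support conditions on ψ and u). -/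
/-- A quadratic with `A ≠ 0` takes a given value at most twice on ℕ. -/
lemma quad_level_card (A B C w : ℝ) (hA : A ≠ 0) (s : Finset ℕ)
    (hs : ∀ n ∈ s, A * (n : ℝ) ^ 2 + B * n + C = w) : s.card ≤ 2 := by
  by_contra h
  push_neg at h
  obtain ⟨x, y, z, hx, hy, hz, hxy, hxz, hyz⟩ := Finset.two_lt_card_iff.mp h
  have ex := hs x hx
  have ey := hs y hy
  have ez := hs z hz
  have hxy' : (x : ℝ) ≠ y := by exact_mod_cast hxy
  have hxz' : (x : ℝ) ≠ z := by exact_mod_cast hxz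
  have hyz' : (y : ℝ) ≠ z := by exact_mod_cast hyz
  have h1 : (A * ((x : ℝ) + y) + B) * ((x : ℝ) - y) = 0 := by linear_combination ex - ey
  have h2 : (A * ((x : ℝ) + z) + B) * ((x : ℝ) - z) = 0 := by linear_combination ex - ez
  have h1' : A * ((x : ℝ) + y) + B = 0 :=
    (mul_eq_zero.mp h1).resolve_right (sub_ne_zero.mpr hxy')
  have h2' : A * ((x : ℝ) + z) + B = 0 :=
    (mul_eq_zero.mp h2).resolve_right (sub_ne_zero.mpr hxz')
  have : A * ((y : ℝ) - z) = 0 := by linear_combination h1' - h2'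
  exact hyz' (by linarith [(mul_eq_zero.mp this).resolve_left hA, sub_eq_zero.mp ((mul_eq_zero.mp this).resolve_left hA)])

set_option maxHeartbeats 1600000 in
open Classical in
/-- Bound on the diagonal term: for `ψ` bounded, supported in `(1/l, l)`, `u`
bounded by `Mu` and supported in `[-1.1, 1.1]`, and `q(x) = Ax² + Bx + C` with
`A ≠ 0`, there is `C₀ > 0` depending only on `l` and `Mu` such that
`(1/X)|∑_{k even, |q(r₁)|=|q(r₂)|} u((k−K)/K^θ) ψ(r₁/X) ψ(r₂/X)| ≤ C₀ K^θ ‖ψ‖_∞²`. -/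
theorem statement10 (l : ℝ) (hl : 1 < l) (Mu : ℝ) :
    ∃ C₀ : ℝ, 0 < C₀ ∧
      ∀ (ψ u : ℝ → ℂ) (Mψ : ℝ) (A B C θ K X : ℝ),
        (∀ x : ℝ, ‖ψ x‖ ≤ Mψ) →
        (∀ x : ℝ, x ∉ Set.Ioo (1 / l) l → ψ x = 0) →
        (∀ x : ℝ, ‖u x‖ ≤ Mu) →
        (∀ x : ℝ, x ∉ Set.Icc (-1.1) 1.1 → u x = 0) →
        A ≠ 0 → 0 < θ → θ ≤ 1 → 1 ≤ K → 1 ≤ X →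
        (1 / X) * ‖∑' p : ℕ × ℕ × ℕ,
            if 0 < p.1 ∧ 0 < p.2.1 ∧ 0 < p.2.2 ∧ 2 ∣ p.2.2 ∧
                |A * (p.1 : ℝ) ^ 2 + B * p.1 + C| =
                  |A * (p.2.1 : ℝ) ^ 2 + B * p.2.1 + C| then
              u (((p.2.2 : ℝ) - K) / K ^ θ) * ψ ((p.1 : ℝ) / X) * ψ ((p.2.1 : ℝ) / X)
            else 0‖ ≤
          C₀ * K ^ θ * Mψ ^ 2 := by
  refine ⟨14 * (l + 1) * (|Mu| + 1), by positivity, ?_⟩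
  intro ψ u Mψ A B C θ K X hψ hψs hu hus hA hθ hθ1 hK hX
  have hX0 : (0 : ℝ) < X := by linarith
  have hK0 : (0 : ℝ) < K := by linarith
  have htpos : (0 : ℝ) < K ^ θ := Real.rpow_pos_of_pos hK0 θ
  have ht1 : (1 : ℝ) ≤ K ^ θ := Real.one_le_rpow hK hθ.le
  have hMψ0 : 0 ≤ Mψ := le_trans (norm_nonneg _) (hψ 0)
  have hMu0 : 0 ≤ Mu := le_trans (norm_nonneg _) (hu 0)
  set q : ℕ → ℝ := fun n => A * (n : ℝ) ^ 2 + B * n + C with hq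
  set R₁ := ⌈l * X⌉₊ with hR₁
  set k₀ := ⌈K - 1.1 * K ^ θ⌉₊ with hk₀
  set k₁ := ⌊K + 1.1 * K ^ θ⌋₊ with hk₁
  set Kset := Finset.Icc k₀ k₁ with hKset
  set Rset : ℕ → Finset ℕ := fun a => (Finset.Icc 1 R₁).filter (fun n => |q n| = |q a|) with hRset
  set F := (Finset.Icc 1 R₁).biUnion (fun a => {a} ×ˢ (Rset a ×ˢ Kset)) with hF
  set f : ℕ × ℕ × ℕ → ℂ := fun p =>
    if 0 < p.1 ∧ 0 < p.2.1 ∧ 0 < p.2.2 ∧ 2 ∣ p.2.2 ∧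
        |A * (p.1 : ℝ) ^ 2 + B * p.1 + C| = |A * (p.2.1 : ℝ) ^ 2 + B * p.2.1 + C| then
      u (((p.2.2 : ℝ) - K) / K ^ θ) * ψ ((p.1 : ℝ) / X) * ψ ((p.2.1 : ℝ) / X)
    else 0 with hf
  -- membership facts from nonvanishing
  have hr_mem : ∀ r : ℕ, 0 < r → ψ ((r : ℝ) / X) ≠ 0 → r ∈ Finset.Icc 1 R₁ := by
    intro r hr hne
    have hmem : (r : ℝ) / X ∈ Set.Ioo (1 / l) l := by
      by_contra hcon
      exact hne (hψs _ hcon)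
    have h2 : (r : ℝ) < l * X := by
      have := hmem.2
      rw [div_lt_iff₀ hX0] at this
      linarith
    have : (r : ℝ) ≤ (R₁ : ℝ) := le_trans h2.le (Nat.le_ceil _)
    exact Finset.mem_Icc.mpr ⟨hr, by exact_mod_cast this⟩
  have hsupp : ∀ p ∉ F, f p = 0 := by
    intro p hp
    by_contra hne
    apply hp
    rw [hf] at hne
    simp only at hne
    split_ifs at hne with hcond
    · obtain ⟨h1, h2, h3, h4, h5⟩ := hcond
      have hu_ne : u (((p.2.2 : ℝ) - K) / K ^ θ) ≠ 0 := fun h => hne (by rw [h]; ring)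
      have hψ1_ne : ψ ((p.1 : ℝ) / X) ≠ 0 := fun h => hne (by rw [h]; ring)
      have hψ2_ne : ψ ((p.2.1 : ℝ) / X) ≠ 0 := fun h => hne (by rw [h]; ring)
      have hm1 := hr_mem p.1 h1 hψ1_ne
      have hm2 := hr_mem p.2.1 h2 hψ2_ne
      have hkmem : p.2.2 ∈ Kset := by
        have hmem : ((p.2.2 : ℝ) - K) / K ^ θ ∈ Set.Icc (-1.1 : ℝ) 1.1 := by
          by_contra hcon
          exact hu_ne (hus _ hcon)
        obtain ⟨ha, hb⟩ := hmem
        rw [le_div_iff₀ htpos] at ha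
        rw [div_le_iff₀ htpos] at hb
        refine Finset.mem_Icc.mpr ⟨Nat.ceil_le.mpr (by linarith), Nat.le_floor (by linarith)⟩
      refine Finset.mem_biUnion.mpr ⟨p.1, hm1, ?_⟩
      refine Finset.mem_product.mpr ⟨Finset.mem_singleton_self _, Finset.mem_product.mpr ⟨?_, hkmem⟩⟩
      exact Finset.mem_filter.mpr ⟨hm2, h5.symm⟩
    · exact absurd rfl hne
  have htsum : (∑' p : ℕ × ℕ × ℕ, f p) = ∑ p ∈ F, f p := tsum_eq_sum hsupp
  -- cardinality bounds
  have hRsetcard : ∀ a : ℕ, (Rset a).card ≤ 4 := by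
    intro a
    set w := |q a| with hw
    have hw0 : 0 ≤ w := abs_nonneg _
    set P := (Finset.Icc 1 R₁).filter (fun n => q n = w) with hP
    set N := (Finset.Icc 1 R₁).filter (fun n => q n = -w) with hN
    have hsub : Rset a ⊆ P ∪ N := by
      intro n hn
      obtain ⟨hn1, hn2⟩ := Finset.mem_filter.mp hn
      rcases (abs_eq hw0).mp hn2 with h | h
      · exact Finset.mem_union_left _ (Finset.mem_filter.mpr ⟨hn1, h⟩)
      · exact Finset.mem_union_right _ (Finset.mem_filter.mpr ⟨hn1, h⟩)
    have hPcard : P.card ≤ 2 :=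
      quad_level_card A B C w hA P (fun n hn => (Finset.mem_filter.mp hn).2)
    have hNcard : N.card ≤ 2 :=
      quad_level_card A B C (-w) hA N (fun n hn => (Finset.mem_filter.mp hn).2)
    calc (Rset a).card ≤ (P ∪ N).card := Finset.card_le_card hsub
      _ ≤ P.card + N.card := Finset.card_union_le _ _
      _ ≤ 4 := by omega
  have hKcard : (Kset.card : ℝ) ≤ 3.3 * K ^ θ := by
    have hk₁le : (k₁ : ℝ) ≤ K + 1.1 * K ^ θ := Nat.floor_le (by nlinarith)
    rcases Nat.eq_zero_or_pos k₀ with h0 | hpos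
    · have hKle : K - 1.1 * K ^ θ ≤ 0 := Nat.ceil_eq_zero.mp h0
      have : Kset.card = k₁ + 1 := by rw [hKset, h0, Nat.card_Icc]; omega
      rw [this]
      push_cast
      nlinarith
    · have hk₀ge : K - 1.1 * K ^ θ ≤ (k₀ : ℝ) := Nat.le_ceil _
      rcases le_or_gt k₀ k₁ with hle | hlt
      · have : Kset.card = k₁ + 1 - k₀ := by rw [hKset, Nat.card_Icc]
        rw [this]
        have : ((k₁ + 1 - k₀ : ℕ) : ℝ) = (k₁ : ℝ) + 1 - k₀ := by
          push_cast [Nat.cast_sub (by omega : k₀ ≤ k₁ + 1)]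
          ring
        rw [this]
        nlinarith
      · have : Kset = ∅ := Finset.Icc_eq_empty (by omega)
        rw [this]
        simp
        positivity
  have hFcard : (F.card : ℝ) ≤ ((l + 1) * X) * (4 * (3.3 * K ^ θ)) := by
    have h1 : F.card ≤ (Finset.Icc 1 R₁).card * (4 * Kset.card) := by
      calc F.card ≤ ∑ a ∈ Finset.Icc 1 R₁, ({a} ×ˢ (Rset a ×ˢ Kset)).card :=
            Finset.card_biUnion_le
        _ ≤ ∑ _a ∈ Finset.Icc 1 R₁, 4 * Kset.card := by
            refine Finset.sum_le_sum fun a _ => ?_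
            rw [Finset.card_product, Finset.card_product, Finset.card_singleton, one_mul]
            exact Nat.mul_le_mul_right _ (hRsetcard a)
        _ = (Finset.Icc 1 R₁).card * (4 * Kset.card) := by rw [Finset.sum_const, smul_eq_mul]
    have h2 : (Finset.Icc 1 R₁).card = R₁ := by rw [Nat.card_Icc]; omega
    have hR₁le : (R₁ : ℝ) ≤ (l + 1) * X := by
      have := Nat.ceil_lt_add_one (by nlinarith : (0 : ℝ) ≤ l * X)
      rw [← hR₁] at this
      nlinarith
    calc (F.card : ℝ) ≤ ((Finset.Icc 1 R₁).card : ℝ) * (4 * Kset.card) := by exact_mod_cast h1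
      _ = (R₁ : ℝ) * (4 * Kset.card) := by rw [h2]
      _ ≤ ((l + 1) * X) * (4 * (3.3 * K ^ θ)) := by
          apply mul_le_mul hR₁le (by nlinarith [Kset.card.cast_nonneg (α := ℝ)]) (by positivity)
          positivity
  -- bound each term
  have hterm : ∀ p ∈ F, ‖f p‖ ≤ Mu * Mψ * Mψ := by
    intro p _
    rw [hf]
    simp only
    split_ifs with hcond
    · rw [norm_mul, norm_mul]
      have h1 := hu (((p.2.2 : ℝ) - K) / K ^ θ)
      have h2 := hψ ((p.1 : ℝ) / X)
      have h3 := hψ ((p.2.1 : ℝ) / X)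
      exact mul_le_mul (mul_le_mul h1 h2 (norm_nonneg _) hMu0) h3
        (norm_nonneg _) (by positivity)
    · simp only [norm_zero]
      positivity
  have hsum_bound : ‖∑ p ∈ F, f p‖ ≤ (F.card : ℝ) * (Mu * Mψ * Mψ) := by
    calc ‖∑ p ∈ F, f p‖ ≤ ∑ p ∈ F, ‖f p‖ :=
          norm_sum_le _ _
      _ ≤ ∑ _p ∈ F, Mu * Mψ * Mψ := Finset.sum_le_sum hterm
      _ = (F.card : ℝ) * (Mu * Mψ * Mψ) := by rw [Finset.sum_const, nsmul_eq_mul]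
  rw [htsum]
  calc (1 / X) * ‖∑ p ∈ F, f p‖
      ≤ (1 / X) * ((F.card : ℝ) * (Mu * Mψ * Mψ)) := by
        apply mul_le_mul_of_nonneg_left hsum_bound (by positivity)
    _ ≤ (1 / X) * ((((l + 1) * X) * (4 * (3.3 * K ^ θ))) * (Mu * Mψ * Mψ)) := by
        apply mul_le_mul_of_nonneg_left _ (by positivity)
        apply mul_le_mul_of_nonneg_right hFcard (by positivity)
    _ = (13.2 * (l + 1) * Mu) * K ^ θ * Mψ ^ 2 := by
        field_simp
        ring
    _ ≤ 14 * (l + 1) * (|Mu| + 1) * K ^ θ * Mψ ^ 2 := by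
        have h1 : Mu ≤ |Mu| + 1 := by linarith [le_abs_self Mu]
        have h2 : 13.2 * (l + 1) * Mu ≤ 14 * (l + 1) * (|Mu| + 1) :=
          mul_le_mul (by linarith) h1 hMu0 (by positivity)
        exact mul_le_mul_of_nonneg_right (mul_le_mul_of_nonneg_right h2 htpos.le)
          (sq_nonneg Mψ)
end

section
/- Let a ≤ b be real numbers, let μ > 0, and let g : ℝ → ℝ be differentiable with derivative g' monotone on [a, b]. Suppose that either g'(t) ≥ μ for all t ∈ [a, b], or g'(t) ≤ −μ for all t ∈ [a, b]. Then |∫_a^b e^{i g(t)} dt| ≤ 4/μ. -/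
open MeasureTheory Set

lemma key (a b : ℝ) (hab : a ≤ b) (μ : ℝ) (hμ : 0 < μ)
    (g : ℝ → ℝ) (hg : Differentiable ℝ g)
    (hmono : MonotoneOn (deriv g) (Set.Icc a b) ∨ AntitoneOn (deriv g) (Set.Icc a b))
    (hder : ∀ t ∈ Set.Icc a b, μ ≤ deriv g t) :
    ‖∫ t in a..b, Complex.exp (Complex.I * (g t : ℂ))‖ ≤ 4 / μ := by
  set c : ℝ := μ⁻¹ with hc
  have hc0 : 0 < c := inv_pos.2 hμ
  set ψ : ℝ → ℝ := fun t => (deriv g t)⁻¹ with hψ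
  have hψpos : ∀ t ∈ Icc a b, 0 < ψ t := fun t ht => inv_pos.2 (hμ.trans_le (hder t ht))
  have hψle : ∀ t ∈ Icc a b, ψ t ≤ c := fun t ht =>
    inv_anti₀ hμ (hder t ht)
  -- the function F = g' e^{ig} and its antiderivative G
  set F : ℝ → ℂ := fun t => (Complex.ofReal (deriv g t)) * Complex.exp (Complex.I * (g t : ℂ)) with hF
  set G : ℝ → ℂ := fun t => -Complex.I * Complex.exp (Complex.I * (g t : ℂ)) with hG
  have hGderiv : ∀ t, HasDerivAt G (F t) t := by
    intro t
    have h1 : HasDerivAt (fun y : ℝ => (Complex.ofReal (g y))) (Complex.ofReal (deriv g t)) t :=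
      ((hg t).hasDerivAt).ofReal_comp
    have h2 : HasDerivAt (fun y : ℝ => Complex.I * (g y : ℂ))
        (Complex.I * Complex.ofReal (deriv g t)) t := h1.const_mul Complex.I
    have h3 := h2.cexp
    have h4 := h3.const_mul (-Complex.I)
    convert h4 using 1
    · rfl
    simp only [hF]
    ring_nf
    rw [Complex.I_sq]
    ring
  have hGnorm : ∀ t, ‖G t‖ = 1 := by
    intro t
    simp only [hG]
    rw [norm_mul]
    simp [Complex.norm_exp]
  -- boundedness of F on Icc a b
  have hmem_a : a ∈ Icc a b := ⟨le_refl a, hab⟩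
  have hmem_b : b ∈ Icc a b := ⟨hab, le_refl b⟩
  set M : ℝ := max (deriv g a) (deriv g b) with hM
  have hM0 : 0 < M := lt_max_of_lt_left (hμ.trans_le (hder a hmem_a))
  have hFle : ∀ t ∈ Icc a b, ‖F t‖ ≤ M := by
    intro t ht
    have : ‖F t‖ = |deriv g t| := by
      simp only [hF]
      rw [norm_mul, Complex.norm_real, Complex.norm_exp]
      simp
    rw [this, abs_of_pos (hμ.trans_le (hder t ht))]
    rcases hmono with h | h
    · exact le_max_of_le_right (h ht hmem_b ht.2)
    · exact le_max_of_le_left (h hmem_a ht ht.1)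
  have hψmeas : Measurable ψ := (measurable_deriv g).inv
  have hFmeas : Measurable F := by
    apply Measurable.mul
    · exact Complex.measurable_ofReal.comp (measurable_deriv g)
    · exact (Complex.continuous_exp.comp
        ((continuous_const.mul (Complex.continuous_ofReal.comp hg.continuous)))).measurable
  have hIccFin : volume (Icc a b) < ⊤ := measure_Icc_lt_top
  have hIocFin : volume (Ioc (0:ℝ) c) < ⊤ := measure_Ioc_lt_top
  have hFint : IntegrableOn F (Icc a b) := by
    apply Integrable.mono' (integrable_const M) (hFmeas.aestronglyMeasurable.restrict)
    rw [ae_restrict_iff' measurableSet_Icc]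
    exact Filter.Eventually.of_forall hFle
  -- superlevel sets of ψ within Icc a b are order-connected
  have hconn : ∀ s : ℝ, ∀ x ∈ Icc a b ∩ {t | s ≤ ψ t}, ∀ y ∈ Icc a b ∩ {t | s ≤ ψ t},
      ∀ z ∈ Icc x y, z ∈ Icc a b ∩ {t | s ≤ ψ t} := by
    intro s x hx y hy z hz
    have hzab : z ∈ Icc a b := ⟨hx.1.1.trans hz.1, hz.2.trans hy.1.2⟩
    refine ⟨hzab, ?_⟩
    rcases hmono with h | h
    · -- deriv g monotone, so ψ antitone: ψ z ≥ ψ y ≥ s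
      have : deriv g z ≤ deriv g y := h hzab hy.1 hz.2
      have := inv_anti₀ (hμ.trans_le (hder z hzab)) this
      exact le_trans hy.2 this
    · have : deriv g z ≤ deriv g x := h hx.1 hzab hz.1
      have := inv_anti₀ (hμ.trans_le (hder z hzab)) this
      exact le_trans hx.2 this
  -- inner bound: the integral of F over any superlevel set has norm ≤ 2
  have hinner : ∀ s : ℝ, ‖∫ t in Icc a b ∩ {t | s ≤ ψ t}, F t‖ ≤ 2 := by
    intro s
    set E : Set ℝ := Icc a b ∩ {t | s ≤ ψ t} with hE
    by_cases hne : E.Nonempty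
    · have hEsub : E ⊆ Icc a b := inter_subset_left
      have hbdd : BddBelow E := BddBelow.mono hEsub bddBelow_Icc
      have hbdd' : BddAbove E := BddAbove.mono hEsub bddAbove_Icc
      set u : ℝ := sInf E with hu
      set v : ℝ := sSup E with hv
      have huv : u ≤ v := Real.sInf_le_sSup E hbdd hbdd'
      have hEIcc : E ⊆ Icc u v := fun e he => ⟨csInf_le hbdd he, le_csSup hbdd' he⟩
      have hIooE : Ioo u v ⊆ E := by
        intro x hx
        obtain ⟨e₁, he₁, he₁x⟩ := exists_lt_of_csInf_lt hne hx.1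
        obtain ⟨e₂, he₂, hxe₂⟩ := exists_lt_of_lt_csSup hne hx.2
        exact hconn s e₁ he₁ e₂ he₂ x ⟨he₁x.le, hxe₂.le⟩
      have hEae : E =ᵐ[volume] Ioo u v := by
        rw [MeasureTheory.ae_eq_set]
        constructor
        · apply measure_mono_null (t := ({u, v} : Set ℝ))
          · intro x hx
            rcases hx with ⟨hxE, hxI⟩
            simp only [mem_insert_iff, mem_singleton_iff]
            rcases eq_or_lt_of_le (hEIcc hxE).1 with h | h
            · exact Or.inl h.symm
            rcases eq_or_lt_of_le (hEIcc hxE).2 with h' | h'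
            · exact Or.inr h'
            · exact absurd ⟨h, h'⟩ hxI
          · exact ((finite_singleton v).insert u).measure_zero volume
        · rw [diff_eq_empty.mpr hIooE]
          simp
      have huab : u ∈ Icc a b := by
        obtain ⟨e, he⟩ := id hne
        constructor
        · exact le_csInf hne (fun x hx => (hEsub hx).1)
        · exact le_trans (csInf_le hbdd he) (hEsub he).2
      have hvab : v ∈ Icc a b := by
        obtain ⟨e, he⟩ := id hne
        constructor
        · exact le_trans (hEsub he).1 (le_csSup hbdd' he)
        · exact csSup_le hne (fun x hx => (hEsub hx).2)
      have hsub2 : Icc u v ⊆ Icc a b := Icc_subset_Icc huab.1 hvab.2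
      have hII : IntervalIntegrable F volume u v := by
        apply IntegrableOn.intervalIntegrable
        rw [uIcc_of_le huv]
        exact hFint.mono_set hsub2
      calc ‖∫ t in E, F t‖ = ‖∫ t in u..v, F t‖ := by
            rw [setIntegral_congr_set hEae, intervalIntegral.integral_of_le huv,
              ← MeasureTheory.integral_Ioc_eq_integral_Ioo]
        _ = ‖G v - G u‖ := by
            rw [intervalIntegral.integral_eq_sub_of_hasDerivAt
              (fun t _ => hGderiv t) hII]
        _ ≤ ‖G v‖ + ‖G u‖ := norm_sub_le _ _
        _ ≤ 2 := by rw [hGnorm, hGnorm]; norm_num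
    · rw [not_nonempty_iff_eq_empty] at hne
      rw [hne]
      simp
  -- layer cake identity pointwise
  haveI hfin1 : IsFiniteMeasure (volume.restrict (Icc a b)) :=
    ⟨by rwa [Measure.restrict_apply_univ]⟩
  haveI hfin2 : IsFiniteMeasure (volume.restrict (Ioc (0:ℝ) c)) :=
    ⟨by rwa [Measure.restrict_apply_univ]⟩
  have hlayer : ∀ t ∈ Icc a b,
      Complex.exp (Complex.I * (g t : ℂ)) = ∫ s in Ioc (0:ℝ) c, (if s ≤ ψ t then F t else 0) := by
    intro t ht
    have h1 : (fun s => if s ≤ ψ t then F t else 0) = (Iic (ψ t)).indicator (fun _ => F t) := by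
      ext s; simp [Set.indicator, mem_Iic]
    rw [h1, setIntegral_indicator measurableSet_Iic]
    have h2 : Ioc (0:ℝ) c ∩ Iic (ψ t) = Ioc 0 (ψ t) := by
      ext s
      simp only [mem_inter_iff, mem_Ioc, mem_Iic]
      exact ⟨fun h => ⟨h.1.1, h.2⟩, fun h => ⟨⟨h.1, h.2.trans (hψle t ht)⟩, h.2⟩⟩
    rw [h2, setIntegral_const, Real.volume_real_Ioc_of_le (hψpos t ht).le, sub_zero,
      Complex.real_smul]
    have hne : (Complex.ofReal (deriv g t)) ≠ 0 := by
      exact_mod_cast ne_of_gt (hμ.trans_le (hder t ht))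
    simp only [hF, hψ]
    push_cast
    rw [inv_mul_cancel_left₀ hne]
  have hstep1 : (∫ t in a..b, Complex.exp (Complex.I * (g t : ℂ)))
      = ∫ t in Icc a b, ∫ s in Ioc (0:ℝ) c, (if s ≤ ψ t then F t else 0) := by
    rw [intervalIntegral.integral_of_le hab, ← MeasureTheory.integral_Icc_eq_integral_Ioc]
    exact setIntegral_congr_fun measurableSet_Icc (fun t ht => hlayer t ht)
  -- Fubini
  have hset : MeasurableSet {p : ℝ × ℝ | p.2 ≤ ψ p.1} :=
    measurableSet_le measurable_snd (hψmeas.comp measurable_fst)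
  have hint2 : Integrable (Function.uncurry (fun t s => if s ≤ ψ t then F t else 0))
      ((volume.restrict (Icc a b)).prod (volume.restrict (Ioc (0:ℝ) c))) := by
    have heq : (Function.uncurry fun t s => if s ≤ ψ t then F t else 0)
        = {p : ℝ × ℝ | p.2 ≤ ψ p.1}.indicator (fun p => F p.1) := by
      ext p
      rcases p with ⟨t, s⟩
      by_cases h : s ≤ ψ t <;> simp [Function.uncurry, Set.indicator, h]
    have hmeas2 : AEStronglyMeasurable (Function.uncurry fun t s => if s ≤ ψ t then F t else 0)
        ((volume.restrict (Icc a b)).prod (volume.restrict (Ioc (0:ℝ) c))) := by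
      rw [heq]
      exact ((hFmeas.comp measurable_fst).indicator hset).aestronglyMeasurable
    apply Integrable.mono' (integrable_const M) hmeas2
    rw [Measure.prod_restrict, ae_restrict_iff' (measurableSet_Icc.prod measurableSet_Ioc)]
    apply Filter.Eventually.of_forall
    rintro ⟨t, s⟩ hp
    rcases mem_prod.1 hp with ⟨ht, _⟩
    by_cases h : s ≤ ψ t
    · simpa [Function.uncurry, h] using hFle t ht
    · simp [Function.uncurry, h, hM0.le]
  have hswap := MeasureTheory.integral_integral_swap hint2
  have hbound : ∀ s ∈ Ioc (0:ℝ) c,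
      ‖∫ t in Icc a b, (if s ≤ ψ t then F t else 0)‖ ≤ 2 := by
    intro s _
    have h1 : (fun t => if s ≤ ψ t then F t else 0) = {t | s ≤ ψ t}.indicator F := by
      ext t; by_cases h : s ≤ ψ t <;> simp [Set.indicator, h]
    rw [h1, setIntegral_indicator (measurableSet_le measurable_const hψmeas)]
    exact hinner s
  rw [hstep1, hswap]
  calc ‖∫ s in Ioc (0:ℝ) c, ∫ t in Icc a b, (if s ≤ ψ t then F t else 0)‖
      ≤ 2 * volume.real (Ioc (0:ℝ) c) :=
        norm_setIntegral_le_of_norm_le_const_ae' hIocFin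
          (Filter.Eventually.of_forall hbound)
    _ = 2 * c := by rw [Real.volume_real_Ioc_of_le hc0.le, sub_zero]
    _ ≤ 4 / μ := by
        rw [hc, div_eq_mul_inv]
        nlinarith [inv_pos.2 hμ]

/-- First-derivative test for oscillatory integrals: if `g'` is monotone on
`[a, b]` and `g' ≥ μ > 0` (or `g' ≤ −μ < 0`) there, then
`|∫_a^b e^{i g(t)} dt| ≤ 4/μ`. -/
theorem statement12 (a b : ℝ) (hab : a ≤ b) (μ : ℝ) (hμ : 0 < μ)
    (g : ℝ → ℝ) (hg : Differentiable ℝ g)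
    (hmono : MonotoneOn (deriv g) (Set.Icc a b) ∨ AntitoneOn (deriv g) (Set.Icc a b))
    (hder : (∀ t ∈ Set.Icc a b, μ ≤ deriv g t) ∨ (∀ t ∈ Set.Icc a b, deriv g t ≤ -μ)) :
    ‖∫ t in a..b, Complex.exp (Complex.I * (g t : ℂ))‖ ≤ 4 / μ := by
  rcases hder with hd | hd
  · exact key a b hab μ hμ g hg hmono hd
  · -- apply `key` to `-g`
    have hderiv : deriv (fun t => -(g t)) = fun t => -(deriv g t) := deriv.neg'
    have h1 := key a b hab μ hμ (fun t => -(g t)) hg.neg ?_ ?_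
    · -- relate the two integrals by conjugation
      have hconj : (∫ t in a..b, Complex.exp (Complex.I * ((-(g t) : ℝ) : ℂ)))
          = (starRingEnd ℂ) (∫ t in a..b, Complex.exp (Complex.I * (g t : ℂ))) := by
        rw [intervalIntegral.integral_of_le hab, intervalIntegral.integral_of_le hab,
          ← integral_conj]
        apply integral_congr_ae
        apply Filter.Eventually.of_forall
        intro t
        simp only
        rw [← Complex.exp_conj]
        congr 1
        simp [Complex.ext_iff]
      rw [hconj, Complex.norm_conj] at h1
      exact h1
    · rw [hderiv]
      rcases hmono with h | h
      · exact Or.inr (fun x hx y hy hxy => neg_le_neg (h hx hy hxy))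
      · exact Or.inl (fun x hx y hy hxy => neg_le_neg (h hx hy hxy))
    · intro t ht
      rw [hderiv]
      simpa using neg_le_neg (hd t ht)
end
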